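/- arXiv:quant-ph/0501105 — 6 statements merged into one kernel-verified Lean document; each statement's English description precedes it below -/
import Mathlib

section
/- Let ρ be a density matrix on ℂᵈ⊗ℂᵈ that is strictly mixed (rank at least 2). Then for any d×d matrices A, B, the operator (A⊗B)ρ(A†⊗B†) is not a positive multiple of a maximally entangled projector |Ψ⟩⟨Ψ| with |Ψ⟩ of Schmidt rank d, unless it is zero. In other words, no mixed d⊗d state can be converted to a maximally entangled state of the full system by a single local filtering operation with nonzero probability. -/
open Matrix Kronecker
open scoped ComplexOrder

noncomputable def psiPlus (d : ℕ) : Fin d × Fin d → ℂ :=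
  fun p => if p.1 = p.2 then ((1 / Real.sqrt d : ℝ) : ℂ) else 0

lemma kron_mulVec_apply {d : ℕ} (A B : Matrix (Fin d) (Fin d) ℂ) (v : Fin d × Fin d → ℂ)
    (i j : Fin d) :
    ((A ⊗ₖ B) *ᵥ v) (i, j) = (A * (Matrix.of fun k l => v (k, l)) * Bᵀ) i j := by
  simp only [mulVec, dotProduct, mul_apply, kroneckerMap_apply, transpose_apply, of_apply,
    Fintype.sum_prod_type, Finset.sum_mul, Finset.mul_sum]
  rw [Finset.sum_comm]
  exact Finset.sum_congr rfl fun k _ => Finset.sum_congr rfl fun l _ => by ring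

lemma kron_conjTranspose {d : ℕ} (A B : Matrix (Fin d) (Fin d) ℂ) : (A ⊗ₖ B)ᴴ = Aᴴ ⊗ₖ Bᴴ := by
  ext ⟨i,j⟩ ⟨k,l⟩
  simp [conjTranspose_apply, mul_comm]

lemma psiPlus_mat {d : ℕ} : (Matrix.of fun k l => psiPlus d (k, l)) =
    ((1 / Real.sqrt d : ℝ) : ℂ) • (1 : Matrix (Fin d) (Fin d) ℂ) := by
  ext k l
  by_cases h : k = l <;> simp [psiPlus, one_apply, h]

lemma psiPlus_norm {d : ℕ} (hd : 0 < d) : star (psiPlus d) ⬝ᵥ psiPlus d = 1 := by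
  simp only [dotProduct, psiPlus, Pi.star_apply, Fintype.sum_prod_type]
  have : ∀ i : Fin d, ∑ j : Fin d, star (if i = j then ((1 / Real.sqrt d : ℝ) : ℂ) else 0)
      * (if i = j then ((1 / Real.sqrt d : ℝ) : ℂ) else 0) = ((d:ℂ))⁻¹ := by
    intro i
    rw [Finset.sum_eq_single i]
    · simp only [if_pos rfl, if_true, eq_self_iff_true]
      rw [Complex.star_def, Complex.conj_ofReal, ← Complex.ofReal_mul]
      rw [one_div, ← mul_inv, Real.mul_self_sqrt (by positivity)]
      push_cast
      ring
    · intro b _ hb; simp [Ne.symm hb]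
    · simp
  simp only [this, Finset.sum_const, Finset.card_univ, Fintype.card_fin, nsmul_eq_mul]
  rw [mul_inv_cancel₀ (by exact_mod_cast hd.ne')]

/-- no strictly mixed `d⊗d` state can be turned into a maximally
entangled state by a single local filtering with nonzero probability:
if `rank ρ ≥ 2` then `(A⊗B)ρ(A⊗B)†`, when nonzero, is never a positive
multiple of a maximally entangled projector `|Ψ⟩⟨Ψ|` with
`|Ψ⟩ = (U₁⊗U₂)|Ψ₊⟩`, `U₁, U₂` unitary. -/
theorem no_single_filter_distillation_of_mixed
    (d : ℕ) (ρ : Matrix (Fin d × Fin d) (Fin d × Fin d) ℂ)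
    (hρ : ρ.PosSemidef) (htr : ρ.trace = 1) (hrank : 2 ≤ ρ.rank)
    (A B : Matrix (Fin d) (Fin d) ℂ)
    (hne : (A ⊗ₖ B) * ρ * (A ⊗ₖ B)ᴴ ≠ 0) :
    ¬ ∃ (c : ℝ) (U₁ U₂ : Matrix (Fin d) (Fin d) ℂ),
        0 < c ∧ U₁ ∈ Matrix.unitaryGroup (Fin d) ℂ ∧
        U₂ ∈ Matrix.unitaryGroup (Fin d) ℂ ∧
        (A ⊗ₖ B) * ρ * (A ⊗ₖ B)ᴴ =
          (c : ℂ) • vecMulVec ((U₁ ⊗ₖ U₂) *ᵥ psiPlus d)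
            (star ((U₁ ⊗ₖ U₂) *ᵥ psiPlus d)) := by
  rcases Nat.eq_zero_or_pos d with hd | hd
  · subst hd
    exact absurd (Subsingleton.elim _ _) hne
  rintro ⟨c, U₁, U₂, hc, hU₁, hU₂, h⟩
  have hcne : (c : ℂ) ≠ 0 := Complex.ofReal_ne_zero.2 hc.ne'
  set M := A ⊗ₖ B with hM
  set ψ : Fin d × Fin d → ℂ := (U₁ ⊗ₖ U₂) *ᵥ psiPlus d with hψdef
  -- unitaries have invertible determinant
  have hdU₁ : IsUnit U₁.det :=
    IsUnit.of_mul_eq_one _ (by rw [← det_mul, hU₁.2, det_one])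
  have hdU₂ : IsUnit U₂.det :=
    IsUnit.of_mul_eq_one _ (by rw [← det_mul, hU₂.2, det_one])
  -- W = U₁ ⊗ U₂ is unitary
  have hW : (U₁ ⊗ₖ U₂)ᴴ * (U₁ ⊗ₖ U₂) = 1 := by
    rw [kron_conjTranspose, ← mul_kronecker_mul, ← star_eq_conjTranspose,
      ← star_eq_conjTranspose, hU₁.1, hU₂.1, one_kronecker_one]
  -- ψ has unit norm
  have hψnorm : star ψ ⬝ᵥ ψ = 1 := by
    rw [hψdef, star_mulVec, dotProduct_mulVec, vecMul_vecMul, hW, vecMul_one,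
      psiPlus_norm hd]
  -- applying the hypothesis to ψ
  have key : (M * ρ * Mᴴ) *ᵥ ψ = (c : ℂ) • ψ := by
    rw [h]
    have hv : vecMulVec ψ (star ψ) *ᵥ ψ = (star ψ ⬝ᵥ ψ) • ψ := by
      funext q
      simp only [vecMulVec, mulVec, dotProduct, Matrix.of_apply, Pi.smul_apply,
        smul_eq_mul, Pi.star_apply, Finset.sum_mul]
      exact Finset.sum_congr rfl fun p _ => by ring
    rw [smul_mulVec, hv, hψnorm, one_smul]
  -- ψ is in the range of M
  have hMx : M *ᵥ ((c : ℂ)⁻¹ • (ρ *ᵥ (Mᴴ *ᵥ ψ))) = ψ := by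
    rw [mulVec_smul, mulVec_mulVec, mulVec_mulVec, key,
      smul_smul, inv_mul_cancel₀ hcne, one_smul]
  set x : Fin d × Fin d → ℂ := (c : ℂ)⁻¹ • (ρ *ᵥ (Mᴴ *ᵥ ψ)) with hx
  -- the matrix of ψ
  have hΨ : (Matrix.of fun i j => ψ (i, j)) =
      U₁ * (((1 / Real.sqrt d : ℝ) : ℂ) • (1 : Matrix (Fin d) (Fin d) ℂ)) * U₂ᵀ := by
    ext i j
    rw [Matrix.of_apply, hψdef, kron_mulVec_apply, psiPlus_mat]
  -- the filtering equation in matrix form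
  have hAXB : A * (Matrix.of fun k l => x (k, l)) * Bᵀ =
      U₁ * (((1 / Real.sqrt d : ℝ) : ℂ) • (1 : Matrix (Fin d) (Fin d) ℂ)) * U₂ᵀ := by
    rw [← hΨ]
    ext i j
    rw [← kron_mulVec_apply, ← hM, hMx, Matrix.of_apply]
  have hs : ((1 / Real.sqrt d : ℝ) : ℂ) ≠ 0 := by
    have : (0 : ℝ) < Real.sqrt d := Real.sqrt_pos.2 (by exact_mod_cast hd)
    exact Complex.ofReal_ne_zero.2 (by positivity)
  -- det A and det B are nonzero
  have hdet : A.det * ((Matrix.of fun k l => x (k, l)).det * B.det) ≠ 0 := by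
    have := congrArg Matrix.det hAXB
    rw [det_mul, det_mul, det_mul, det_mul, det_transpose, det_transpose,
      det_smul, det_one] at this
    rw [← mul_assoc, this]
    exact mul_ne_zero (mul_ne_zero hdU₁.ne_zero
      (mul_ne_zero (pow_ne_zero _ hs) one_ne_zero)) hdU₂.ne_zero
  have hdA : A.det ≠ 0 := fun h0 => hdet (by rw [h0, zero_mul])
  have hdB : B.det ≠ 0 := fun h0 => hdet (by rw [h0, mul_zero, mul_zero])
  -- M has invertible determinant
  have hdM : IsUnit M.det := by
    rw [hM, det_kronecker]
    exact isUnit_iff_ne_zero.2 (mul_ne_zero (pow_ne_zero _ hdA) (pow_ne_zero _ hdB))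
  have hdMH : IsUnit Mᴴ.det := by
    rw [det_conjTranspose]
    exact isUnit_iff_ne_zero.2 (star_ne_zero.2 hdM.ne_zero)
  -- rank computation
  have h1 : (M * ρ * Mᴴ).rank = ρ.rank := by
    rw [rank_mul_eq_left_of_isUnit_det Mᴴ (M * ρ) hdMH,
      rank_mul_eq_right_of_isUnit_det M ρ hdM]
  have h2 : (M * ρ * Mᴴ).rank ≤ 1 := by
    rw [h]
    have hsm : (c : ℂ) • vecMulVec ψ (star ψ) = vecMulVec ((c : ℂ) • ψ) (star ψ) := by
      ext i j
      simp [vecMulVec, mul_assoc]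
    rw [hsm, vecMulVec_eq Unit]
    exact (rank_mul_le_left _ _).trans ((rank_le_card_width _).trans (by simp))
  omega
end

section
/- Let ρ be a density matrix on ℂᵈᴬ⊗ℂᵈᴮ. If there exist orthogonal projections P on ℂᵈᴬ and Q on ℂᵈᴮ, both of rank m, such that (P⊗Q)ρ(P⊗Q) is a nonzero multiple of a rank-one projector onto a vector of Schmidt rank m, then rank(ρ) ≤ d_A·d_B − m² + 1. -/
open Matrix Kronecker
open scoped ComplexOrder

def toMat {dA dB : ℕ} (ψ : Fin dA × Fin dB → ℂ) : Matrix (Fin dA) (Fin dB) ℂ :=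
  Matrix.of fun i j => ψ (i, j)

lemma rank_cast_eq_trace {n : Type*} [Fintype n] [DecidableEq n]
    (A : Matrix n n ℂ) (hA : A * A = A) : (A.rank : ℂ) = A.trace := by
  have hproj : LinearMap.IsProj (LinearMap.range A.mulVecLin) A.mulVecLin := by
    refine ⟨fun x => LinearMap.mem_range_self _ x, ?_⟩
    rintro x ⟨y, rfl⟩
    rw [← LinearMap.comp_apply, ← Matrix.mulVecLin_mul, hA]
  have ht := hproj.trace
  rw [LinearMap.trace_eq_matrix_trace ℂ (Pi.basisFun ℂ n),
    LinearMap.toMatrix_eq_toMatrix'] at ht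
  rw [Matrix.rank, ← ht]
  congr 1
  ext i j
  simp [LinearMap.toMatrix'_apply, Matrix.mulVecLin_apply, Matrix.mulVec, dotProduct,
    Pi.single_apply]

/-- if rank-`m` local projections `P`, `Q` map `ρ` onto a nonzero
multiple of a projector onto a Schmidt-rank-`m` vector, then
`rank ρ ≤ dA·dB − m² + 1`. -/
theorem rank_bound_of_projected_pure
    (dA dB m : ℕ)
    (ρ : Matrix (Fin dA × Fin dB) (Fin dA × Fin dB) ℂ)
    (hρ : ρ.PosSemidef) (htr : ρ.trace = 1)
    (P : Matrix (Fin dA) (Fin dA) ℂ) (Q : Matrix (Fin dB) (Fin dB) ℂ)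
    (hP : P.IsHermitian) (hPidem : P * P = P) (hPrank : P.rank = m)
    (hQ : Q.IsHermitian) (hQidem : Q * Q = Q) (hQrank : Q.rank = m)
    (v : Fin dA × Fin dB → ℂ) (hSR : (toMat v).rank = m) (c : ℂ) (hc : c ≠ 0)
    (h : (P ⊗ₖ Q) * ρ * (P ⊗ₖ Q) = c • vecMulVec v (star v)) :
    ρ.rank ≤ dA * dB - m ^ 2 + 1 := by
  classical
  set R : Matrix (Fin dA × Fin dB) (Fin dA × Fin dB) ℂ := P ⊗ₖ Q with hRdef
  have hRidem : R * R = R := by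
    rw [hRdef, ← Matrix.mul_kronecker_mul, hPidem, hQidem]
  have hRherm : Rᴴ = R := by
    ext ⟨i, j⟩ ⟨k, l⟩
    simp only [hRdef, Matrix.conjTranspose_apply, Matrix.kroneckerMap_apply, star_mul']
    rw [← Matrix.conjTranspose_apply P, ← Matrix.conjTranspose_apply Q, hP.eq, hQ.eq]
  -- rank of R is m^2
  have hPtr : P.trace = (m : ℂ) := by
    have := rank_cast_eq_trace P hPidem; rw [hPrank] at this; exact this.symm
  have hQtr : Q.trace = (m : ℂ) := by
    have := rank_cast_eq_trace Q hQidem; rw [hQrank] at this; exact this.symm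
  have hRrank : R.rank = m ^ 2 := by
    have h1 := rank_cast_eq_trace R hRidem
    rw [hRdef, Matrix.trace_kronecker, hPtr, hQtr] at h1
    have : (R.rank : ℂ) = ((m ^ 2 : ℕ) : ℂ) := by rw [h1]; push_cast; ring
    exact_mod_cast this
  set U := LinearMap.range R.mulVecLin with hUdef
  have hUrank : Module.finrank ℂ U = m ^ 2 := hRrank
  -- the linear functional x ↦ ⟨v, x⟩
  let f : (Fin dA × Fin dB → ℂ) →ₗ[ℂ] ℂ :=
    { toFun := fun x => star v ⬝ᵥ x
      map_add' := fun x y => dotProduct_add _ _ _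
      map_smul' := fun a x => dotProduct_smul _ _ _ }
  set W := U ⊓ LinearMap.ker f with hWdef
  have hWker : W ≤ LinearMap.ker ρ.mulVecLin := by
    rintro x ⟨hxU, hxf⟩
    obtain ⟨y, hy⟩ := hxU
    have hfix : R *ᵥ x = x := by
      rw [← hy]
      show R *ᵥ (R *ᵥ y) = R.mulVecLin y
      rw [Matrix.mulVec_mulVec, hRidem]; rfl
    have hx' : star x ᵥ* R = star x := by
      calc star x ᵥ* R = star x ᵥ* Rᴴᴴ := by rw [conjTranspose_conjTranspose]
        _ = star (Rᴴ *ᵥ x) := (Matrix.star_mulVec _ _).symm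
        _ = star x := by rw [hRherm, hfix]
    have hfx : star v ⬝ᵥ x = 0 := hxf
    have hdot : star x ⬝ᵥ ρ *ᵥ x = 0 := by
      have key : star x ⬝ᵥ ρ *ᵥ x = star x ⬝ᵥ (R * ρ * R) *ᵥ x := by
        rw [← Matrix.mulVec_mulVec, ← Matrix.mulVec_mulVec, hfix,
          Matrix.dotProduct_mulVec _ R, hx']
      rw [key, hRdef, h]
      simp only [Matrix.smul_mulVec, dotProduct_smul]
      have hmv : vecMulVec v (star v) *ᵥ x = (star v ⬝ᵥ x) • v := by
        ext i
        simp only [Matrix.mulVec, dotProduct, Matrix.vecMulVec_apply, Pi.smul_apply,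
          smul_eq_mul, Finset.sum_mul]
        exact Finset.sum_congr rfl fun j _ => by ring
      rw [hmv, hfx]
      simp
    have h0 := (hρ.dotProduct_mulVec_zero_iff x).mp hdot
    simpa [LinearMap.mem_ker, Matrix.mulVecLin_apply] using h0
  -- dimension count
  have hsup := Submodule.finrank_sup_add_finrank_inf_eq U (LinearMap.ker f)
  have htot : Module.finrank ℂ (Fin dA × Fin dB → ℂ) = dA * dB := by
    rw [Module.finrank_fintype_fun_eq_card, Fintype.card_prod, Fintype.card_fin, Fintype.card_fin]
  have hfr : Module.finrank ℂ (LinearMap.range f) + Module.finrank ℂ (LinearMap.ker f)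
      = dA * dB := by
    rw [← htot]; exact LinearMap.finrank_range_add_finrank_ker f
  have hrange1 : Module.finrank ℂ (LinearMap.range f) ≤ 1 := by
    have := Submodule.finrank_le (LinearMap.range f)
    simpa using this
  have hsuple : Module.finrank ℂ ↥(U ⊔ LinearMap.ker f) ≤ dA * dB := by
    rw [← htot]; exact Submodule.finrank_le _
  have hW : Module.finrank ℂ U ≤ Module.finrank ℂ W + 1 := by rw [hWdef]; omega
  have hmono : Module.finrank ℂ W ≤ Module.finrank ℂ (LinearMap.ker ρ.mulVecLin) :=
    Submodule.finrank_mono hWker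
  have hrn : ρ.rank + Module.finrank ℂ (LinearMap.ker ρ.mulVecLin) = dA * dB := by
    have := LinearMap.finrank_range_add_finrank_ker ρ.mulVecLin
    rwa [Module.finrank_fintype_fun_eq_card, Fintype.card_prod, Fintype.card_fin,
      Fintype.card_fin] at this
  have hm2 : m ^ 2 ≤ dA * dB := by
    have := R.rank_le_card_width
    rw [hRrank] at this
    simpa [Fintype.card_prod] using this
  omega
end

section
/- Let ρ be a full-rank density matrix on ℂᵈᴬ⊗ℂᵈᴮ and suppose there exist sequences (Aₙ), (Bₙ) with Tr(Aₙ†Aₙ) = Tr(Bₙ†Bₙ) = 1 such that the normalized states ρₙ = (Aₙ⊗Bₙ)ρ(Aₙ†⊗Bₙ†)/Tr((Aₙ⊗Bₙ)ρ(Aₙ†⊗Bₙ†)) satisfy F^m(ρₙ) → 1. Then there exist limit operators A, B such that (A⊗B)ρ(A†⊗B†) is a positive multiple of |Ψ₊ᵐ⟩⟨Ψ₊ᵐ|. -/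
open Matrix Kronecker
open scoped ComplexOrder

/-- The canonical maximally entangled vector of Schmidt rank `m`, embedded in
`ℂ^{dA} ⊗ ℂ^{dB}`. -/
noncomputable def psiPlusM (dA dB m : ℕ) : Fin dA × Fin dB → ℂ :=
  fun p => if (p.1 : ℕ) = (p.2 : ℕ) ∧ (p.1 : ℕ) < m
    then ((1 / Real.sqrt m : ℝ) : ℂ) else 0

/-- `m`-singlet fraction `F^m(σ) = ⟨Ψ₊^m|σ|Ψ₊^m⟩`. -/
noncomputable def mSingletFraction (dA dB m : ℕ)
    (σ : Matrix (Fin dA × Fin dB) (Fin dA × Fin dB) ℂ) : ℝ :=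
  (star (psiPlusM dA dB m) ⬝ᵥ σ *ᵥ psiPlusM dA dB m).re

variable {ι κ : Type*} [Fintype ι] [Fintype κ] [DecidableEq ι] [DecidableEq κ]

lemma trace_mul_vecMulVec (M : Matrix ι ι ℂ) (a b : ι → ℂ) :
    (M * vecMulVec a b).trace = b ⬝ᵥ M *ᵥ a := by
  simp only [Matrix.trace, Matrix.diag, Matrix.mul_apply, vecMulVec_apply, dotProduct,
    Matrix.mulVec, Finset.mul_sum]
  refine Finset.sum_congr rfl fun i _ => Finset.sum_congr rfl fun j _ => by ring

lemma vecMulVec_mul_vecMulVec (a b c d : ι → ℂ) :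
    vecMulVec a b * vecMulVec c d = (b ⬝ᵥ c) • vecMulVec a d := by
  ext i j
  simp only [Matrix.mul_apply, vecMulVec_apply, Matrix.smul_apply, dotProduct, smul_eq_mul,
    Finset.sum_mul]
  refine Finset.sum_congr rfl fun k _ => by ring

lemma mul_vecMulVec (M : Matrix ι ι ℂ) (a b : ι → ℂ) :
    M * vecMulVec a b = vecMulVec (M *ᵥ a) b := by
  ext i j
  simp only [Matrix.mul_apply, vecMulVec_apply, Matrix.mulVec, dotProduct, Finset.sum_mul]
  refine Finset.sum_congr rfl fun k _ => by ring

lemma trace_conjT_mul_self (C : Matrix ι κ ℂ) :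
    (Cᴴ * C).trace = ((∑ j, ∑ i, Complex.normSq (C i j) : ℝ) : ℂ) := by
  push_cast
  simp only [Matrix.trace, Matrix.diag, Matrix.mul_apply, conjTranspose_apply]
  refine Finset.sum_congr rfl fun j _ => Finset.sum_congr rfl fun i _ => ?_
  rw [Complex.normSq_eq_conj_mul_self]
  rfl

lemma star_dot_self (w : ι → ℂ) :
    star w ⬝ᵥ w = ((∑ i, Complex.normSq (w i) : ℝ) : ℂ) := by
  push_cast
  simp only [dotProduct, Pi.star_apply]
  refine Finset.sum_congr rfl fun i _ => ?_
  rw [Complex.normSq_eq_conj_mul_self]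
  rfl

lemma normSq_sum_mul_le (a b : ι → ℂ) :
    Complex.normSq (∑ j, a j * b j) ≤
      (∑ j, Complex.normSq (a j)) * (∑ j, Complex.normSq (b j)) := by
  have h := norm_inner_le_norm (𝕜 := ℂ) (E := EuclideanSpace ℂ ι)
    ((WithLp.equiv 2 (ι → ℂ)).symm (star a)) ((WithLp.equiv 2 (ι → ℂ)).symm b)
  have hinner : (inner ℂ ((WithLp.equiv 2 (ι → ℂ)).symm (star a))
      ((WithLp.equiv 2 (ι → ℂ)).symm b) : ℂ) = ∑ j, a j * b j := by
    rw [PiLp.inner_apply]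
    refine Finset.sum_congr rfl fun j _ => ?_
    simp only [WithLp.equiv_symm_apply, PiLp.toLp_apply, RCLike.inner_apply, Pi.star_apply,
      starRingEnd_apply, star_star, mul_comm]
  have hna : ‖(WithLp.equiv 2 (ι → ℂ)).symm (star a)‖ ^ 2 = ∑ j, Complex.normSq (a j) := by
    rw [EuclideanSpace.norm_eq, Real.sq_sqrt (by positivity)]
    refine Finset.sum_congr rfl fun j _ => ?_
    simp [Complex.normSq_eq_norm_sq]
  have hnb : ‖(WithLp.equiv 2 (ι → ℂ)).symm b‖ ^ 2 = ∑ j, Complex.normSq (b j) := by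
    rw [EuclideanSpace.norm_eq, Real.sq_sqrt (by positivity)]
    refine Finset.sum_congr rfl fun j _ => ?_
    simp [Complex.normSq_eq_norm_sq]
  calc Complex.normSq (∑ j, a j * b j)
      = ‖(∑ j, a j * b j : ℂ)‖ ^ 2 := by rw [Complex.normSq_eq_norm_sq]
    _ ≤ (‖(WithLp.equiv 2 (ι → ℂ)).symm (star a)‖ * ‖(WithLp.equiv 2 (ι → ℂ)).symm b‖) ^ 2 := by
        rw [← hinner]; exact pow_le_pow_left₀ (norm_nonneg _) h 2
    _ = _ := by rw [mul_pow, hna, hnb]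

open scoped MatrixOrder in
lemma psd_eq_conjT_mul_self {M : Matrix ι ι ℂ} (hM : M.PosSemidef) :
    ∃ B : Matrix ι ι ℂ, M = Bᴴ * B := by
  obtain ⟨B, hB⟩ := CStarAlgebra.nonneg_iff_eq_star_mul_self.mp hM.nonneg
  exact ⟨B, hB⟩

lemma quad_re_le_trace (M : Matrix ι ι ℂ) (hM : M.PosSemidef) (v : ι → ℂ) :
    (star v ⬝ᵥ M *ᵥ v).re ≤ M.trace.re * (star v ⬝ᵥ v).re := by
  obtain ⟨C, rfl⟩ := psd_eq_conjT_mul_self hM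
  have h1 : star v ⬝ᵥ (Cᴴ * C) *ᵥ v = star (C *ᵥ v) ⬝ᵥ (C *ᵥ v) := by
    rw [← Matrix.mulVec_mulVec, Matrix.dotProduct_mulVec, ← Matrix.star_mulVec]
  rw [h1, star_dot_self, star_dot_self, trace_conjT_mul_self, Complex.ofReal_re,
    Complex.ofReal_re, Complex.ofReal_re]
  calc ∑ i, Complex.normSq ((C *ᵥ v) i)
      ≤ ∑ i, (∑ j, Complex.normSq (C i j)) * (∑ j, Complex.normSq (v j)) := by
        refine Finset.sum_le_sum fun i _ => ?_
        exact normSq_sum_mul_le _ _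
    _ = _ := by rw [← Finset.sum_mul, Finset.sum_comm]

lemma eq_zero_of_sum_normSq (D : Matrix ι κ ℂ)
    (h : (∑ j, ∑ i, Complex.normSq (D i j)) = 0) : D = 0 := by
  ext i j
  have h1 := (Finset.sum_eq_zero_iff_of_nonneg (fun j _ =>
    Finset.sum_nonneg fun i _ => Complex.normSq_nonneg _)).mp h j (Finset.mem_univ j)
  have h2 := (Finset.sum_eq_zero_iff_of_nonneg (fun i _ =>
    Complex.normSq_nonneg _)).mp h1 i (Finset.mem_univ i)
  simpa using Complex.normSq_eq_zero.mp h2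

lemma psd_quad_real {M : Matrix ι ι ℂ} (hM : M.PosSemidef) (v : ι → ℂ) :
    star v ⬝ᵥ M *ᵥ v = (((star v ⬝ᵥ M *ᵥ v).re : ℝ) : ℂ) := by
  have h := hM.dotProduct_mulVec_nonneg v
  rw [Complex.le_def] at h
  exact Complex.ext rfl (by simpa using h.2.symm)

lemma psd_quad_re_nonneg {M : Matrix ι ι ℂ} (hM : M.PosSemidef) (v : ι → ℂ) :
    0 ≤ (star v ⬝ᵥ M *ᵥ v).re := by
  have h := hM.dotProduct_mulVec_nonneg v
  rw [Complex.le_def] at h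
  simpa using h.1

lemma psd_trace_real {M : Matrix ι ι ℂ} (hM : M.PosSemidef) :
    ∃ r : ℝ, 0 ≤ r ∧ M.trace = (r : ℂ) := by
  obtain ⟨C, rfl⟩ := psd_eq_conjT_mul_self hM
  exact ⟨∑ j, ∑ i, Complex.normSq (C i j),
    Finset.sum_nonneg fun _ _ => Finset.sum_nonneg fun _ _ => Complex.normSq_nonneg _,
    trace_conjT_mul_self C⟩

lemma psd_ofReal_smul {M : Matrix ι ι ℂ} (hM : M.PosSemidef) {t : ℝ} (ht : 0 ≤ t) :
    (((t : ℂ)) • M).PosSemidef := by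
  refine Matrix.PosSemidef.of_dotProduct_mulVec_nonneg ?_ fun x => ?_
  · rw [Matrix.IsHermitian, conjTranspose_smul, hM.1.eq]
    congr 1
    simp [Complex.star_def, Complex.conj_ofReal]
  · rw [Matrix.smul_mulVec, dotProduct_smul, psd_quad_real hM x, smul_eq_mul,
      ← Complex.ofReal_mul]
    exact Complex.zero_le_real.mpr (mul_nonneg ht (psd_quad_re_nonneg hM x))

lemma diag_mul_mul_conjT (X : Matrix ι κ ℂ) (ρ : Matrix κ κ ℂ) (j : ι) :
    (X * ρ * Xᴴ) j j
      = star (fun k => star (X j k)) ⬝ᵥ ρ *ᵥ (fun k => star (X j k)) := by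
  simp only [Matrix.mul_apply, conjTranspose_apply, dotProduct, Matrix.mulVec,
    Pi.star_apply, star_star, Finset.sum_mul, Finset.mul_sum]
  rw [Finset.sum_comm]
  refine Finset.sum_congr rfl fun k _ => Finset.sum_congr rfl fun l _ => by ring

lemma continuous_kron {dA dB : ℕ} :
    Continuous (fun pq : Matrix (Fin dA) (Fin dA) ℂ × Matrix (Fin dB) (Fin dB) ℂ =>
      pq.1 ⊗ₖ pq.2) := by
  apply continuous_matrix
  rintro ⟨i, k⟩ ⟨j, l⟩
  simp only [kroneckerMap_apply]
  exact (continuous_fst.matrix_elem i j).mul (continuous_snd.matrix_elem k l)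

lemma psi_norm (dA dB m : ℕ) :
    ∃ s : ℝ, 0 ≤ s ∧ s ≤ 1 ∧
      star (psiPlusM dA dB m) ⬝ᵥ psiPlusM dA dB m = (s : ℂ) := by
  classical
  set T := Finset.univ.filter (fun p : Fin dA × Fin dB =>
      (p.1 : ℕ) = (p.2 : ℕ) ∧ (p.1 : ℕ) < m) with hT
  refine ⟨(T.card : ℝ) / m, by positivity, ?_, ?_⟩
  · have hcard : T.card ≤ m := by
      have h := Finset.card_le_card_of_injOn (fun p : Fin dA × Fin dB => (p.1 : ℕ)) ?_ ?_ (s := T) (t := Finset.range m)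
      · simpa using h
      · intro p hp
        rw [hT, Finset.coe_filter] at hp
        exact Finset.mem_range.mpr hp.2.2
      · intro p hp q hq hpq
        simp only [hT, Finset.coe_filter, Finset.mem_univ, true_and,
          Set.mem_setOf_eq] at hp hq
        have h1 : p.1 = q.1 := Fin.val_injective hpq
        have h2 : p.2 = q.2 := Fin.val_injective (by
          rw [← hp.1, ← hq.1]; exact hpq)
        exact Prod.ext h1 h2
    rcases Nat.eq_zero_or_pos m with hm | hm
    · subst hm
      have : T = ∅ := by
        rw [hT]; ext p; simp
      simp [this]
    · rw [div_le_one (by exact_mod_cast hm)]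
      exact_mod_cast hcard
  · rw [star_dot_self]
    congr 1
    have hterm : ∀ p : Fin dA × Fin dB, Complex.normSq (psiPlusM dA dB m p)
        = if (p.1 : ℕ) = (p.2 : ℕ) ∧ (p.1 : ℕ) < m then 1 / (m : ℝ) else 0 := by
      intro p
      rw [psiPlusM, apply_ite Complex.normSq]
      simp only [Complex.normSq_ofReal, Complex.normSq_zero]
      congr 1
      rw [div_mul_div_comm, one_mul, Real.mul_self_sqrt (Nat.cast_nonneg m)]
    simp_rw [hterm]
    rw [Finset.sum_ite, Finset.sum_const, Finset.sum_const_zero, add_zero, ← hT,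
      nsmul_eq_mul]
    ring


set_option maxHeartbeats 1000000 in
/-- if a full-rank density matrix admits filtering sequences whose
normalized outputs have `m`-singlet fraction tending to `1`, then some limit
filters map `ρ` exactly onto a positive multiple of `|Ψ₊^m⟩⟨Ψ₊^m|`. -/
theorem limit_filters_of_quasidistillation
    (dA dB m : ℕ)
    (ρ : Matrix (Fin dA × Fin dB) (Fin dA × Fin dB) ℂ)
    (hρ : ρ.PosDef) (htr : ρ.trace = 1)
    (A : ℕ → Matrix (Fin dA) (Fin dA) ℂ) (B : ℕ → Matrix (Fin dB) (Fin dB) ℂ)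
    (hA : ∀ n, ((A n)ᴴ * (A n)).trace = 1)
    (hB : ∀ n, ((B n)ᴴ * (B n)).trace = 1)
    (hF : Filter.Tendsto
      (fun n => mSingletFraction dA dB m
        (((((A n) ⊗ₖ (B n)) * ρ * ((A n) ⊗ₖ (B n))ᴴ).trace)⁻¹ •
          (((A n) ⊗ₖ (B n)) * ρ * ((A n) ⊗ₖ (B n))ᴴ)))
      Filter.atTop (nhds 1)) :
    ∃ (Alim : Matrix (Fin dA) (Fin dA) ℂ) (Blim : Matrix (Fin dB) (Fin dB) ℂ)
      (c : ℝ), 0 < c ∧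
      (Alim ⊗ₖ Blim) * ρ * (Alim ⊗ₖ Blim)ᴴ =
        (c : ℂ) • vecMulVec (psiPlusM dA dB m) (star (psiPlusM dA dB m)) := by

  classical
  obtain ⟨s, hs0, hs1, hψs⟩ := psi_norm dA dB m
  obtain ⟨C, hC⟩ := psd_eq_conjT_mul_self hρ.posSemidef
  -- uniform bound on the singlet fraction
  have hbound : ∀ (P : Matrix (Fin dA) (Fin dA) ℂ) (Q : Matrix (Fin dB) (Fin dB) ℂ),
      mSingletFraction dA dB m ((((P ⊗ₖ Q) * ρ * (P ⊗ₖ Q)ᴴ).trace)⁻¹ •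
        ((P ⊗ₖ Q) * ρ * (P ⊗ₖ Q)ᴴ)) ≤ s := by
    intro P Q
    set X := P ⊗ₖ Q with hX
    set M := X * ρ * Xᴴ with hM
    have hMpsd : M.PosSemidef := hρ.posSemidef.mul_mul_conjTranspose_same X
    obtain ⟨r, hr0, hrtr⟩ := psd_trace_real hMpsd
    have hq0 : 0 ≤ (star (psiPlusM dA dB m) ⬝ᵥ M *ᵥ psiPlusM dA dB m).re :=
      psd_quad_re_nonneg hMpsd _
    have hCS := quad_re_le_trace M hMpsd (psiPlusM dA dB m)
    rw [hrtr, Complex.ofReal_re, hψs, Complex.ofReal_re] at hCS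
    unfold mSingletFraction
    rw [Matrix.smul_mulVec, dotProduct_smul, hrtr, ← Complex.ofReal_inv,
      smul_eq_mul, Complex.re_ofReal_mul]
    rcases eq_or_lt_of_le hr0 with h | h
    · rw [← h]
      simpa using hs0
    · calc r⁻¹ * (star (psiPlusM dA dB m) ⬝ᵥ M *ᵥ psiPlusM dA dB m).re
          ≤ r⁻¹ * (r * s) := by
            exact mul_le_mul_of_nonneg_left hCS (by positivity)
        _ = s := by field_simp
  -- s = 1
  have h1s : (1 : ℝ) ≤ s :=
    le_of_tendsto hF (Filter.Eventually.of_forall fun n => hbound (A n) (B n))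
  have hψ1 : star (psiPlusM dA dB m) ⬝ᵥ psiPlusM dA dB m = 1 := by
    rw [hψs, le_antisymm hs1 h1s]
    norm_num
  -- entry bounds and compactness
  have entry_bound : ∀ {d : ℕ} (P : Matrix (Fin d) (Fin d) ℂ), (Pᴴ * P).trace = 1 →
      ∀ i j, ‖P i j‖ ≤ 1 := by
    intro d P hP i j
    rw [trace_conjT_mul_self] at hP
    have hsum : (∑ j', ∑ i', Complex.normSq (P i' j')) = 1 := by exact_mod_cast hP
    have hle : Complex.normSq (P i j) ≤ 1 := by
      rw [← hsum]
      calc Complex.normSq (P i j) ≤ ∑ i', Complex.normSq (P i' j) :=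
          Finset.single_le_sum (f := fun i' => Complex.normSq (P i' j))
            (fun _ _ => Complex.normSq_nonneg _) (Finset.mem_univ i)
        _ ≤ ∑ j', ∑ i', Complex.normSq (P i' j') :=
          Finset.single_le_sum (f := fun j' => ∑ i', Complex.normSq (P i' j'))
            (fun _ _ => Finset.sum_nonneg fun _ _ => Complex.normSq_nonneg _)
            (Finset.mem_univ j)
    have h2 : ‖P i j‖ ^ 2 ≤ 1 := by
      rw [Complex.sq_norm]; exact hle
    nlinarith [norm_nonneg (P i j)]
  have hKcompact : ∀ (d : ℕ), IsCompact {M : Matrix (Fin d) (Fin d) ℂ | ∀ i j, ‖M i j‖ ≤ 1} := by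
    intro d
    have hset : {M : Matrix (Fin d) (Fin d) ℂ | ∀ i j, ‖M i j‖ ≤ 1}
        = Set.univ.pi (fun _ : Fin d => Set.univ.pi fun _ : Fin d =>
            Metric.closedBall (0 : ℂ) 1) := by
      ext M
      constructor
      · intro h i _ j _
        simpa [Metric.mem_closedBall, dist_zero_right] using h i j
      · intro h i j
        simpa [Metric.mem_closedBall, dist_zero_right] using
          h i (Set.mem_univ i) j (Set.mem_univ j)
    rw [hset]
    exact isCompact_univ_pi fun _ => isCompact_univ_pi fun _ =>
      isCompact_closedBall _ _
  haveI : FirstCountableTopology (Matrix (Fin dA) (Fin dA) ℂ) :=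
    inferInstanceAs (FirstCountableTopology (Fin dA → Fin dA → ℂ))
  haveI : FirstCountableTopology (Matrix (Fin dB) (Fin dB) ℂ) :=
    inferInstanceAs (FirstCountableTopology (Fin dB → Fin dB → ℂ))
  obtain ⟨⟨Al, Bl⟩, _hmem, φ, hφ, hconv⟩ :=
    ((hKcompact dA).prod (hKcompact dB)).tendsto_subseq
      (x := fun n => (A n, B n))
      (fun n => Set.mk_mem_prod (fun i j => entry_bound (A n) (hA n) i j)
        (fun i j => entry_bound (B n) (hB n) i j))
  have hconvA : Filter.Tendsto (fun n => A (φ n)) Filter.atTop (nhds Al) :=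
    (continuous_fst.tendsto _).comp hconv
  have hconvB : Filter.Tendsto (fun n => B (φ n)) Filter.atTop (nhds Bl) :=
    (continuous_snd.tendsto _).comp hconv
  -- limit filters are nonzero
  have htrlim : ∀ {d : ℕ} (L : Matrix (Fin d) (Fin d) ℂ)
      (f : ℕ → Matrix (Fin d) (Fin d) ℂ),
      Filter.Tendsto f Filter.atTop (nhds L) → (∀ n, ((f n)ᴴ * (f n)).trace = 1) →
      (Lᴴ * L).trace = 1 := by
    intro d L f hf h1
    have hc : Continuous fun P : Matrix (Fin d) (Fin d) ℂ => (Pᴴ * P).trace :=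
      ((continuous_id.matrix_conjTranspose).matrix_mul continuous_id).matrix_trace
    have h2 : Filter.Tendsto (fun n => ((f n)ᴴ * (f n)).trace) Filter.atTop
        (nhds ((Lᴴ * L).trace)) := (hc.tendsto L).comp hf
    simp only [h1] at h2
    exact tendsto_nhds_unique h2 tendsto_const_nhds
  have hAl0 : Al ≠ 0 := by
    intro h0
    have := htrlim Al (fun n => A (φ n)) hconvA (fun n => hA (φ n))
    rw [h0] at this
    simp at this
  have hBl0 : Bl ≠ 0 := by
    intro h0
    have := htrlim Bl (fun n => B (φ n)) hconvB (fun n => hB (φ n))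
    rw [h0] at this
    simp at this
  have hXne : ∃ p q, (Al ⊗ₖ Bl) p q ≠ 0 := by
    obtain ⟨i, j, hij⟩ : ∃ i j, Al i j ≠ 0 := by
      by_contra h; push_neg at h
      exact hAl0 (by ext i j; simpa using h i j)
    obtain ⟨k, l, hkl⟩ : ∃ k l, Bl k l ≠ 0 := by
      by_contra h; push_neg at h
      exact hBl0 (by ext k l; simpa using h k l)
    exact ⟨(i, k), (j, l), by
      simp only [kroneckerMap_apply]
      exact mul_ne_zero hij hkl⟩
  set M := (Al ⊗ₖ Bl) * ρ * (Al ⊗ₖ Bl)ᴴ with hMdef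
  have hMpsd : M.PosSemidef := hρ.posSemidef.mul_mul_conjTranspose_same _
  obtain ⟨r, hr0, hrtr⟩ := psd_trace_real hMpsd
  have hrne : r ≠ 0 := by
    intro h0
    have hMD : M = (C * (Al ⊗ₖ Bl)ᴴ)ᴴ * (C * (Al ⊗ₖ Bl)ᴴ) := by
      rw [hMdef, hC, conjTranspose_mul, conjTranspose_conjTranspose]
      noncomm_ring
    have hD0 : C * (Al ⊗ₖ Bl)ᴴ = 0 := by
      apply eq_zero_of_sum_normSq
      have htr0 : ((C * (Al ⊗ₖ Bl)ᴴ)ᴴ * (C * (Al ⊗ₖ Bl)ᴴ)).trace = 0 := by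
        rw [← hMD, hrtr, h0]; simp
      rw [trace_conjT_mul_self] at htr0
      exact_mod_cast htr0
    have hM0 : M = 0 := by rw [hMD, hD0]; simp
    obtain ⟨p, q, hpq⟩ := hXne
    have hv : (fun k => star ((Al ⊗ₖ Bl) p k)) = 0 := by
      by_contra hv
      have hlt := hρ.dotProduct_mulVec_pos hv
      have : (0 : ℂ) < 0 := by
        calc (0 : ℂ) < star (fun k => star ((Al ⊗ₖ Bl) p k)) ⬝ᵥ
            ρ *ᵥ (fun k => star ((Al ⊗ₖ Bl) p k)) := hlt
          _ = M p p := (diag_mul_mul_conjT _ ρ p).symm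
          _ = 0 := by rw [hM0]; rfl
      exact lt_irrefl _ this
    have := congrFun hv q
    simp only [Pi.zero_apply, star_eq_zero] at this
    exact hpq this
  have hrpos : 0 < r := lt_of_le_of_ne hr0 (Ne.symm hrne)
  have htrne : M.trace ≠ 0 := by
    rw [hrtr]
    exact_mod_cast hrne
  -- convergence of the normalized states
  have hΦ : Continuous (fun pq : Matrix (Fin dA) (Fin dA) ℂ × Matrix (Fin dB) (Fin dB) ℂ =>
      (pq.1 ⊗ₖ pq.2) * ρ * (pq.1 ⊗ₖ pq.2)ᴴ) :=
    (continuous_kron.matrix_mul continuous_const).matrix_mul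
      continuous_kron.matrix_conjTranspose
  have hkconv : Filter.Tendsto (fun n => A (φ n) ⊗ₖ B (φ n))
      Filter.atTop (nhds (Al ⊗ₖ Bl)) :=
    (continuous_kron.tendsto (Al, Bl)).comp hconv
  have hMconv : Filter.Tendsto
      (fun n => (A (φ n) ⊗ₖ B (φ n)) * ρ * (A (φ n) ⊗ₖ B (φ n))ᴴ)
      Filter.atTop (nhds M) := by
    simp only [← Matrix.star_eq_conjTranspose]
    exact (hkconv.mul tendsto_const_nhds).mul hkconv.star
  have htrconv : Filter.Tendsto
      (fun n => ((A (φ n) ⊗ₖ B (φ n)) * ρ * (A (φ n) ⊗ₖ B (φ n))ᴴ).trace)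
      Filter.atTop (nhds M.trace) := by
    have hc : Continuous fun N : Matrix (Fin dA × Fin dB) (Fin dA × Fin dB) ℂ => N.trace :=
      continuous_id.matrix_trace
    exact (hc.tendsto M).comp hMconv
  have hσconv : Filter.Tendsto
      (fun n => (((A (φ n) ⊗ₖ B (φ n)) * ρ * (A (φ n) ⊗ₖ B (φ n))ᴴ).trace)⁻¹ •
        ((A (φ n) ⊗ₖ B (φ n)) * ρ * (A (φ n) ⊗ₖ B (φ n))ᴴ))
      Filter.atTop (nhds ((M.trace)⁻¹ • M)) :=
    (htrconv.inv₀ htrne).smul hMconv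
  have hFcont : Continuous (mSingletFraction dA dB m) := by
    unfold mSingletFraction
    exact Complex.continuous_re.comp
      (continuous_const.dotProduct (continuous_id.matrix_mulVec continuous_const))
  have hF1 : mSingletFraction dA dB m ((M.trace)⁻¹ • M) = 1 := by
    have t1 : Filter.Tendsto
        (fun n => mSingletFraction dA dB m
          ((((A (φ n) ⊗ₖ B (φ n)) * ρ * (A (φ n) ⊗ₖ B (φ n))ᴴ).trace)⁻¹ •
            ((A (φ n) ⊗ₖ B (φ n)) * ρ * (A (φ n) ⊗ₖ B (φ n))ᴴ)))
        Filter.atTop (nhds (mSingletFraction dA dB m ((M.trace)⁻¹ • M))) :=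
      (hFcont.tendsto _).comp hσconv
    have t2 : Filter.Tendsto
        (fun n => mSingletFraction dA dB m
          ((((A (φ n) ⊗ₖ B (φ n)) * ρ * (A (φ n) ⊗ₖ B (φ n))ᴴ).trace)⁻¹ •
            ((A (φ n) ⊗ₖ B (φ n)) * ρ * (A (φ n) ⊗ₖ B (φ n))ᴴ)))
        Filter.atTop (nhds 1) := hF.comp hφ.tendsto_atTop
    exact tendsto_nhds_unique t1 t2
  -- final algebra
  set σ := (M.trace)⁻¹ • M with hσdef
  have hσpsd : σ.PosSemidef := by
    rw [hσdef, hrtr, ← Complex.ofReal_inv]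
    exact psd_ofReal_smul hMpsd (inv_nonneg.mpr hr0)
  have hz : star (psiPlusM dA dB m) ⬝ᵥ σ *ᵥ psiPlusM dA dB m = 1 := by
    unfold mSingletFraction at hF1
    rw [psd_quad_real hσpsd, hF1]
    norm_num
  obtain ⟨E, hE⟩ := psd_eq_conjT_mul_self hσpsd
  set P := vecMulVec (psiPlusM dA dB m) (star (psiPlusM dA dB m)) with hPdef
  have hPherm : Pᴴ = P := by
    rw [hPdef]
    ext i j
    simp only [conjTranspose_apply, vecMulVec_apply, Pi.star_apply, star_mul', star_star]
    ring
  have hPP : P * P = P := by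
    rw [hPdef, _root_.vecMulVec_mul_vecMulVec, hψ1, one_smul]
  have htrσ : σ.trace = 1 := by
    rw [hσdef, trace_smul, smul_eq_mul, inv_mul_cancel₀ htrne]
  have htrσP : (σ * P).trace = 1 := by
    rw [hPdef, trace_mul_vecMulVec, hz]
  have htrPσ : (P * σ).trace = 1 := by
    rw [trace_mul_comm]; exact htrσP
  have htrPσP : (P * σ * P).trace = 1 := by
    rw [Matrix.trace_mul_cycle, hPP]; exact htrPσ
  have hEP : E * P = E := by
    have expand : (E * P - E)ᴴ * (E * P - E)
        = P * σ * P - P * σ - σ * P + σ := by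
      rw [conjTranspose_sub, conjTranspose_mul, hPherm, hE]
      noncomm_ring
    have hG : ((E * P - E)ᴴ * (E * P - E)).trace = 0 := by
      rw [expand, trace_add, trace_sub, trace_sub, htrPσP, htrPσ, htrσP, htrσ]
      ring
    rw [trace_conjT_mul_self] at hG
    have h0 : E * P - E = 0 := eq_zero_of_sum_normSq _ (by exact_mod_cast hG)
    have := sub_eq_zero.mp h0
    exact this
  have hσP : σ = P := by
    calc σ = Eᴴ * E := hE
      _ = (E * P)ᴴ * (E * P) := by rw [hEP]
      _ = P * σ * P := by
          rw [conjTranspose_mul, hPherm, hE]; noncomm_ring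
      _ = P * vecMulVec (σ *ᵥ psiPlusM dA dB m) (star (psiPlusM dA dB m)) := by
          rw [mul_assoc, hPdef, _root_.mul_vecMulVec]
      _ = (star (psiPlusM dA dB m) ⬝ᵥ σ *ᵥ psiPlusM dA dB m) •
            vecMulVec (psiPlusM dA dB m) (star (psiPlusM dA dB m)) := by
          rw [hPdef, _root_.vecMulVec_mul_vecMulVec]
      _ = P := by rw [hz, one_smul, hPdef]
  refine ⟨Al, Bl, r, hrpos, ?_⟩
  calc (Al ⊗ₖ Bl) * ρ * (Al ⊗ₖ Bl)ᴴ = M := hMdef.symm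
    _ = M.trace • σ := by rw [hσdef, smul_smul, mul_inv_cancel₀ htrne, one_smul]
    _ = (r : ℂ) • vecMulVec (psiPlusM dA dB m) (star (psiPlusM dA dB m)) := by
        rw [hrtr, hσP, hPdef]
end

section
/- Any strictly mixed full-rank density matrix ρ on ℂᵈ⊗ℂᵈ is not single-copy quasidistillable by local filtering: there exists a threshold F_thr < 1 such that for all matrices A, B with Tr((A⊗B)ρ(A†⊗B†)) > 0, the singlet fraction of the normalized filtered state (A⊗B)ρ(A†⊗B†)/Tr((A⊗B)ρ(A†⊗B†)) is at most F_thr. -/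
open Matrix Kronecker
open scoped ComplexOrder

noncomputable def singletFraction {d : ℕ}
    (σ : Matrix (Fin d × Fin d) (Fin d × Fin d) ℂ) : ℝ :=
  (star (psiPlus d) ⬝ᵥ σ *ᵥ psiPlus d).re

section Helpers

variable {ι κ n : Type*} [Fintype ι] [Fintype κ] [Fintype n] [DecidableEq n]

/-- Cauchy-Schwarz for complex sums. -/
lemma cs_complex (f g : ι → ℂ) :
    ‖∑ i, f i * g i‖ ^ 2 ≤ (∑ i, ‖f i‖ ^ 2) * (∑ i, ‖g i‖ ^ 2) := by
  calc ‖∑ i, f i * g i‖ ^ 2 ≤ (∑ i, ‖f i‖ * ‖g i‖) ^ 2 := by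
        apply pow_le_pow_left₀ (norm_nonneg _)
        refine le_trans (norm_sum_le _ _) ?_
        simp [norm_mul, le_refl]
    _ ≤ (∑ i, ‖f i‖ ^ 2) * (∑ i, ‖g i‖ ^ 2) :=
        Finset.sum_mul_sq_le_sq_mul_sq _ _ _

lemma conj_mul_self (z : ℂ) : (starRingEnd ℂ) z * z = ((‖z‖ ^ 2 : ℝ) : ℂ) := by
  rw [mul_comm, Complex.mul_conj]
  norm_cast
  rw [Complex.normSq_eq_norm_sq]

lemma psd_diag_nonneg [DecidableEq ι] {X : Matrix ι ι ℂ} (hX : X.PosSemidef) (i : ι) :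
    0 ≤ X i i := by
  have := hX.dotProduct_mulVec_nonneg (Pi.single i 1)
  simpa [mulVec_single, dotProduct, Pi.single_apply] using this

lemma psd_trace_eq_re [DecidableEq ι] {X : Matrix ι ι ℂ} (hX : X.PosSemidef) :
    X.trace = (X.trace.re : ℂ) ∧ 0 ≤ X.trace.re := by
  have h : 0 ≤ X.trace := Finset.sum_nonneg fun i _ => psd_diag_nonneg hX i
  obtain ⟨h1, h2⟩ := Complex.nonneg_iff.mp h
  exact ⟨Complex.ext rfl h2.symm, h1⟩

lemma psd_dot_eq_re {X : Matrix ι ι ℂ} (hX : X.PosSemidef) (v : ι → ℂ) :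
    star v ⬝ᵥ X *ᵥ v = ((star v ⬝ᵥ X *ᵥ v).re : ℂ) ∧ 0 ≤ (star v ⬝ᵥ X *ᵥ v).re := by
  have h := hX.dotProduct_mulVec_nonneg v
  obtain ⟨h1, h2⟩ := Complex.nonneg_iff.mp h
  exact ⟨Complex.ext rfl h2.symm, h1⟩

lemma dot_conjTranspose_mul (X : Matrix ι κ ℂ) (v : κ → ℂ) :
    star v ⬝ᵥ (Xᴴ * X) *ᵥ v = ((∑ i, ‖(X *ᵥ v) i‖ ^ 2 : ℝ) : ℂ) := by
  rw [← mulVec_mulVec, dotProduct_mulVec, ← star_mulVec]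
  push_cast
  simp [dotProduct, Pi.star_apply, conj_mul_self]

lemma trace_conjTranspose_mul (X : Matrix ι κ ℂ) :
    (Xᴴ * X).trace = ((∑ i, ∑ j, ‖X i j‖ ^ 2 : ℝ) : ℂ) := by
  push_cast
  simp [Matrix.trace, Matrix.diag, Matrix.mul_apply, conjTranspose_apply, conj_mul_self]
  exact Finset.sum_comm ..

lemma trace_mul_conjTranspose (X : Matrix ι κ ℂ) :
    (X * Xᴴ).trace = ((∑ i, ∑ j, ‖X i j‖ ^ 2 : ℝ) : ℂ) := by
  rw [Matrix.trace_mul_comm, trace_conjTranspose_mul]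

/-- expectation value of a PSD matrix in a unit vector is at most the trace -/
lemma psd_dot_le_trace [DecidableEq ι] {X : Matrix ι ι ℂ} (hX : X.PosSemidef) (v : ι → ℂ)
    (hv : ∑ i, ‖v i‖ ^ 2 = 1) :
    (star v ⬝ᵥ X *ᵥ v).re ≤ X.trace.re := by
  open scoped MatrixOrder in
  obtain ⟨N, hN⟩ := CStarAlgebra.nonneg_iff_eq_star_mul_self.mp hX.nonneg
  rw [star_eq_conjTranspose] at hN
  subst hN
  rw [dot_conjTranspose_mul, trace_conjTranspose_mul, Complex.ofReal_re, Complex.ofReal_re]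
  calc ∑ i, ‖(N *ᵥ v) i‖ ^ 2 ≤ (∑ i, ∑ j, ‖N i j‖ ^ 2) * (∑ j, ‖v j‖ ^ 2) := by
        rw [Finset.sum_mul]
        exact Finset.sum_le_sum fun i _ => cs_complex (fun j => N i j) v
    _ = ∑ i, ∑ j, ‖N i j‖ ^ 2 := by rw [hv, mul_one]

lemma conj_diag_psd (U : Matrix n n ℂ) {f : n → ℝ} (hf : ∀ i, 0 ≤ f i) :
    (U * Matrix.diagonal (Complex.ofReal ∘ f) * Uᴴ).PosSemidef := by
  refine Matrix.PosSemidef.mul_mul_conjTranspose_same ?_ U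
  exact Matrix.PosSemidef.diagonal fun i => by
    simpa using Complex.zero_le_real.mpr (hf i)

lemma conj_diag_sub (U : Matrix n n ℂ) (f g : n → ℝ) :
    U * Matrix.diagonal (Complex.ofReal ∘ f) * Uᴴ - U * Matrix.diagonal (Complex.ofReal ∘ g) * Uᴴ
      = U * Matrix.diagonal (Complex.ofReal ∘ (f - g)) * Uᴴ := by
  have hd : Matrix.diagonal (Complex.ofReal ∘ (f - g))
      = Matrix.diagonal (Complex.ofReal ∘ f) - Matrix.diagonal (Complex.ofReal ∘ g) := by
    ext i j
    by_cases hij : i = j <;> simp [Matrix.diagonal_apply, hij]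
  rw [hd, Matrix.mul_sub, Matrix.sub_mul]

lemma loewner_bounds [Nonempty n] {ρ : Matrix n n ℂ} (hρ : ρ.PosDef) (htr : ρ.trace = 1) :
    ∃ m : ℝ, 0 < m ∧ (ρ - (m : ℂ) • 1).PosSemidef ∧ ((1 : Matrix n n ℂ) - ρ).PosSemidef := by
  have h : ρ.IsHermitian := hρ.1
  set U : Matrix n n ℂ := (h.eigenvectorUnitary : Matrix n n ℂ) with hU
  have hUU : U * Uᴴ = 1 := by
    rw [← Matrix.star_eq_conjTranspose]
    exact (Matrix.mem_unitaryGroup_iff).mp h.eigenvectorUnitary.2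
  have hUU' : Uᴴ * U = 1 := by
    rw [← Matrix.star_eq_conjTranspose]
    exact (Matrix.mem_unitaryGroup_iff').mp h.eigenvectorUnitary.2
  have hspec : ρ = U * Matrix.diagonal (Complex.ofReal ∘ h.eigenvalues) * Uᴴ := by
    rw [← Matrix.star_eq_conjTranspose]
    exact h.spectral_theorem
  have hconst : ∀ c : ℝ, U * Matrix.diagonal (Complex.ofReal ∘ fun _ : n => c) * Uᴴ
      = (c : ℂ) • (1 : Matrix n n ℂ) := by
    intro c
    have : Matrix.diagonal (Complex.ofReal ∘ fun _ : n => c) = (c : ℂ) • (1 : Matrix n n ℂ) := by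
      ext i j
      by_cases hij : i = j <;> simp [Matrix.diagonal_apply, Matrix.one_apply, hij]
    rw [this, Matrix.mul_smul, Matrix.smul_mul, Matrix.mul_one, hUU]
  have htrsum : ∑ i, h.eigenvalues i = 1 := by
    have h2 : (U * Matrix.diagonal (Complex.ofReal ∘ h.eigenvalues) * Uᴴ).trace
        = ((∑ i, h.eigenvalues i : ℝ) : ℂ) := by
      rw [Matrix.trace_mul_cycle, hUU', one_mul, Matrix.trace_diagonal]
      push_cast; rfl
    rw [← hspec, htr] at h2
    exact_mod_cast h2.symm
  have hev_nonneg : ∀ i, 0 ≤ h.eigenvalues i := fun i => le_of_lt (hρ.eigenvalues_pos i)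
  have hev_le_one : ∀ i, h.eigenvalues i ≤ 1 := by
    intro i
    rw [← htrsum]
    exact Finset.single_le_sum (fun j _ => hev_nonneg j) (Finset.mem_univ i)
  set m : ℝ := Finset.univ.inf' Finset.univ_nonempty h.eigenvalues with hm
  have hm_pos : 0 < m := (Finset.lt_inf'_iff _).mpr fun i _ => hρ.eigenvalues_pos i
  have hm_le : ∀ i, m ≤ h.eigenvalues i := fun i => Finset.inf'_le _ (Finset.mem_univ i)
  refine ⟨m, hm_pos, ?_, ?_⟩
  · have e1 : ρ - (m : ℂ) • 1
        = U * Matrix.diagonal (Complex.ofReal ∘ (h.eigenvalues - fun _ => m)) * Uᴴ := by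
      rw [← conj_diag_sub, ← hspec, hconst]
    rw [e1]
    exact conj_diag_psd U fun i => sub_nonneg.mpr (hm_le i)
  · have e2 : (1 : Matrix n n ℂ) - ρ
        = U * Matrix.diagonal (Complex.ofReal ∘ ((fun _ => 1) - h.eigenvalues)) * Uᴴ := by
      rw [← conj_diag_sub, ← hspec, hconst]
      norm_num
    rw [e2]
    exact conj_diag_psd U fun i => sub_nonneg.mpr (hev_le_one i)

end Helpers

lemma psi_norm_sq (d : ℕ) (hd : 1 ≤ d) (p : Fin d × Fin d) :
    ‖psiPlus d p‖ ^ 2 = if p.1 = p.2 then (d : ℝ)⁻¹ else 0 := by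
  unfold psiPlus
  split
  · rw [Complex.norm_real]
    rw [Real.norm_eq_abs, sq_abs, div_pow, one_pow, Real.sq_sqrt (by positivity)]
    simp
  · simp

lemma psi_norm_s9 (d : ℕ) (hd : 1 ≤ d) : ∑ p, ‖psiPlus d p‖ ^ 2 = 1 := by
  simp only [psi_norm_sq d hd]
  rw [Fintype.sum_prod_type]
  simp [Finset.sum_ite_eq, Finset.mem_univ]
  field_simp

lemma kron_frob (d : ℕ) (A B : Matrix (Fin d) (Fin d) ℂ) :
    ∑ p, ∑ q, ‖(A ⊗ₖ B) p q‖ ^ 2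
      = (∑ i, ∑ k, ‖A i k‖ ^ 2) * (∑ j, ∑ l, ‖B j l‖ ^ 2) := by
  rw [Fintype.sum_prod_type]
  simp only [Fintype.sum_prod_type, kroneckerMap_apply, norm_mul, mul_pow]
  rw [Finset.sum_mul]
  refine Finset.sum_congr rfl fun i _ => ?_
  rw [Finset.mul_sum]
  refine Finset.sum_congr rfl fun j _ => ?_
  rw [Finset.sum_mul]
  refine Finset.sum_congr rfl fun k _ => ?_
  rw [Finset.mul_sum]

/-- key structural bound: ‖(A⊗B)ᴴ ψ‖² ≤ (1/d) ‖A‖²_F ‖B‖²_F -/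
lemma kron_vec_bound (d : ℕ) (hd : 1 ≤ d) (A B : Matrix (Fin d) (Fin d) ℂ) :
    ∑ q, ‖((A ⊗ₖ B)ᴴ *ᵥ psiPlus d) q‖ ^ 2
      ≤ (d : ℝ)⁻¹ * ((∑ i, ∑ k, ‖A i k‖ ^ 2) * (∑ j, ∑ l, ‖B j l‖ ^ 2)) := by
  have hw : ∀ q : Fin d × Fin d, ((A ⊗ₖ B)ᴴ *ᵥ psiPlus d) q
      = ((1 / Real.sqrt d : ℝ) : ℂ) *
          ∑ i, (starRingEnd ℂ) (A i q.1) * (starRingEnd ℂ) (B i q.2) := by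
    intro q
    simp only [mulVec, dotProduct, conjTranspose_apply, kroneckerMap_apply, psiPlus,
      Fintype.sum_prod_type]
    rw [Finset.mul_sum]
    refine Finset.sum_congr rfl fun i _ => ?_
    rw [Finset.sum_eq_single i]
    · simp [star_mul']; ring
    · intro b _ hb
      simp [Ne.symm hb]
    · intro h
      exact absurd (Finset.mem_univ i) h
  have hcsq : ‖((1 / Real.sqrt d : ℝ) : ℂ)‖ ^ 2 = (d : ℝ)⁻¹ := by
    rw [Complex.norm_real, Real.norm_eq_abs, sq_abs, div_pow, one_pow,
      Real.sq_sqrt (by positivity)]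
    simp
  calc ∑ q, ‖((A ⊗ₖ B)ᴴ *ᵥ psiPlus d) q‖ ^ 2
      = ∑ q : Fin d × Fin d, (d : ℝ)⁻¹ *
          ‖∑ i, (starRingEnd ℂ) (A i q.1) * (starRingEnd ℂ) (B i q.2)‖ ^ 2 := by
        refine Finset.sum_congr rfl fun q _ => ?_
        rw [hw q, norm_mul, mul_pow, hcsq]
    _ ≤ ∑ q : Fin d × Fin d, (d : ℝ)⁻¹ *
          ((∑ i, ‖A i q.1‖ ^ 2) * (∑ i, ‖B i q.2‖ ^ 2)) := by
        refine Finset.sum_le_sum fun q _ => ?_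
        refine mul_le_mul_of_nonneg_left ?_ (by positivity)
        have := cs_complex (fun i => (starRingEnd ℂ) (A i q.1))
          (fun i => (starRingEnd ℂ) (B i q.2))
        simpa using this
    _ = (d : ℝ)⁻¹ * ((∑ i, ∑ k, ‖A i k‖ ^ 2) * (∑ j, ∑ l, ‖B j l‖ ^ 2)) := by
        rw [← Finset.mul_sum]
        congr 1
        rw [show (∑ i, ∑ k, ‖A i k‖ ^ 2) = ∑ k, ∑ i, ‖A i k‖ ^ 2 from Finset.sum_comm ..,
          show (∑ j, ∑ l, ‖B j l‖ ^ 2) = ∑ l, ∑ j, ‖B j l‖ ^ 2 from Finset.sum_comm ..,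
          Fintype.sum_prod_type]
        exact (Finset.sum_mul_sum Finset.univ Finset.univ
          (fun k => ∑ i, ‖A i k‖ ^ 2) (fun l => ∑ j, ‖B j l‖ ^ 2)).symm

/-- a strictly mixed full-rank density matrix on `ℂ^d ⊗ ℂ^d` is
not single-copy quasidistillable by local filtering: there is a threshold
`F_thr < 1` bounding the singlet fraction of every normalized filtered state. -/
theorem full_rank_not_SCQD
    (d : ℕ) (hd : 2 ≤ d)
    (ρ : Matrix (Fin d × Fin d) (Fin d × Fin d) ℂ)
    (hρ : ρ.PosDef) (htr : ρ.trace = 1) :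
    ∃ Fthr : ℝ, Fthr < 1 ∧
      ∀ A B : Matrix (Fin d) (Fin d) ℂ,
        0 < ((A ⊗ₖ B) * ρ * (A ⊗ₖ B)ᴴ).trace.re →
        singletFraction
          ((((A ⊗ₖ B) * ρ * (A ⊗ₖ B)ᴴ).trace)⁻¹ •
            ((A ⊗ₖ B) * ρ * (A ⊗ₖ B)ᴴ)) ≤ Fthr := by
  haveI : Nonempty (Fin d) := ⟨⟨0, by omega⟩⟩
  obtain ⟨m, hm_pos, hlow, hup⟩ := loewner_bounds hρ htr
  refine ⟨1 - m / 2, by linarith, ?_⟩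
  intro A B ht
  set ψ := psiPlus d with hψdef
  set M := A ⊗ₖ B with hM
  set σ := M * ρ * Mᴴ with hσdef
  have hσ : σ.PosSemidef := hρ.posSemidef.mul_mul_conjTranspose_same M
  set τ := M * (ρ - (m : ℂ) • 1) * Mᴴ with hτdef
  have hτ : τ.PosSemidef := hlow.mul_mul_conjTranspose_same M
  set τ' := M * ((1 : Matrix _ _ ℂ) - ρ) * Mᴴ with hτ'def
  have hτ' : τ'.PosSemidef := hup.mul_mul_conjTranspose_same M
  set s : ℝ := ∑ p, ∑ q, ‖M p q‖ ^ 2 with hs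
  set W : ℝ := ∑ q, ‖(Mᴴ *ᵥ ψ) q‖ ^ 2 with hW
  have hs_nonneg : 0 ≤ s :=
    Finset.sum_nonneg fun p _ => Finset.sum_nonneg fun q _ => by positivity
  -- decomposition σ = τ + m • (M Mᴴ), and σ + τ' = M Mᴴ
  have hMM : M * ((m : ℂ) • 1) * Mᴴ = (m : ℂ) • (M * Mᴴ) := by
    rw [Matrix.mul_smul, Matrix.mul_one, Matrix.smul_mul]
  have hdecomp : σ = τ + (m : ℂ) • (M * Mᴴ) := by
    rw [hτdef, Matrix.mul_sub, Matrix.sub_mul, hMM, hσdef, sub_add_cancel]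
  have hdecomp' : τ' = M * Mᴴ - σ := by
    rw [hτ'def, Matrix.mul_sub, Matrix.sub_mul, Matrix.mul_one, hσdef]
  -- trace identities
  have htraceMM : (M * Mᴴ).trace = ((s : ℝ) : ℂ) := trace_mul_conjTranspose M
  have hdotMM : star ψ ⬝ᵥ (M * Mᴴ) *ᵥ ψ = ((W : ℝ) : ℂ) := by
    have := dot_conjTranspose_mul Mᴴ ψ
    rwa [conjTranspose_conjTranspose] at this
  -- real components
  set t : ℝ := σ.trace.re with htdef
  set n : ℝ := (star ψ ⬝ᵥ σ *ᵥ ψ).re with hndef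
  set tτ : ℝ := τ.trace.re with htτdef
  set nτ : ℝ := (star ψ ⬝ᵥ τ *ᵥ ψ).re with hnτdef
  obtain ⟨hσtr_re, _⟩ := psd_trace_eq_re hσ
  obtain ⟨hσdot_re, hn_nonneg⟩ := psd_dot_eq_re hσ ψ
  obtain ⟨hτtr_re, _⟩ := psd_trace_eq_re hτ
  obtain ⟨hτdot_re, _⟩ := psd_dot_eq_re hτ ψ
  obtain ⟨_, hτ'tr_nonneg⟩ := psd_trace_eq_re hτ'
  -- t = tτ + m * s
  have ht1 : t = tτ + m * s := by
    have : σ.trace = τ.trace + (m : ℂ) * ((s : ℝ) : ℂ) := by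
      rw [hdecomp, Matrix.trace_add, Matrix.trace_smul, htraceMM, smul_eq_mul]
    rw [htdef, this]
    simp [Complex.add_re, Complex.mul_re]
    rfl
  -- n = nτ + m * W
  have hn1 : n = nτ + m * W := by
    have : star ψ ⬝ᵥ σ *ᵥ ψ = star ψ ⬝ᵥ τ *ᵥ ψ + (m : ℂ) * ((W : ℝ) : ℂ) := by
      rw [hdecomp, Matrix.add_mulVec, dotProduct_add, Matrix.smul_mulVec,
        dotProduct_smul, hdotMM, smul_eq_mul]
    rw [hndef, this]
    simp [Complex.add_re, Complex.mul_re]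
    rfl
  -- t ≤ s
  have ht2 : t ≤ s := by
    have : τ'.trace = ((s : ℝ) : ℂ) - σ.trace := by
      rw [hdecomp', Matrix.trace_sub, htraceMM]
    have h3 : τ'.trace.re = s - t := by rw [this]; simp [Complex.sub_re]; rfl
    linarith [hτ'tr_nonneg, h3.symm.le, h3.le]
  -- nτ ≤ tτ
  have hnτ : nτ ≤ tτ := psd_dot_le_trace hτ ψ (psi_norm_s9 d (by omega))
  -- W ≤ s / 2
  have hW2 : W ≤ s / 2 := by
    have h4 : W ≤ (d : ℝ)⁻¹ * s := by
      rw [hW, hs, hM, hψdef, kron_frob]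
      exact kron_vec_bound d (by omega) A B
    have h5 : (d : ℝ)⁻¹ ≤ 1 / 2 := by
      rw [inv_le_comm₀ (by positivity) (by norm_num)]
      push_cast
      norm_num
      exact_mod_cast hd
    nlinarith
  -- main inequality: n ≤ (1 - m/2) * t
  have hmain : n ≤ (1 - m / 2) * t := by nlinarith
  -- compute the singlet fraction of the normalized state
  have hfrac : singletFraction ((σ.trace)⁻¹ • σ) = t⁻¹ * n := by
    unfold singletFraction
    rw [Matrix.smul_mulVec, dotProduct_smul, smul_eq_mul, hσtr_re, ← htdef,
      hσdot_re, ← hndef, ← Complex.ofReal_inv, ← Complex.ofReal_mul, Complex.ofReal_re]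
  rw [hσdef] at hfrac ⊢
  rw [hfrac]
  rw [inv_mul_le_iff₀ ht]
  linarith [hmain, mul_comm (1 - m / 2) t]
end

section
/- If a d⊗d state ρ is regarded as a state on the larger bipartite system ℂᵈ'⊗ℂᵈ' (d' > d) via an isometric embedding of each local space, then for every pair of local operators A, B on ℂᵈ' with nonzero outcome probability, the d'⊗d' singlet fraction of the normalized filtered state is at most d/d'. -/
open Matrix Kronecker
open scoped ComplexOrder

lemma trace_conj_mul_self {m n : Type*} [Fintype m] [Fintype n] (Y : Matrix m n ℂ) :
    (Yᴴ * Y).trace = ((∑ p : m × n, ‖Y p.1 p.2‖ ^ 2 : ℝ) : ℂ) := by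
  classical
  have : (Yᴴ * Y).trace = ∑ j, ∑ i, (starRingEnd ℂ) (Y i j) * Y i j := by
    simp [Matrix.trace, Matrix.diag, Matrix.mul_apply, Matrix.conjTranspose_apply]
  rw [this]
  rw [Fintype.sum_prod_type]
  push_cast
  rw [Finset.sum_comm]
  refine Finset.sum_congr rfl fun i _ => Finset.sum_congr rfl fun j _ => ?_
  rw [mul_comm, Complex.mul_conj']

lemma star_psiPlus (d : ℕ) : star (psiPlus d) = psiPlus d := by
  funext p
  simp only [Pi.star_apply, psiPlus]
  by_cases h : p.1 = p.2 <;> simp [h]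

lemma dot_conj_self {m n : Type*} [Fintype m] [Fintype n] (N : Matrix m n ℂ) (v : n → ℂ) :
    star v ⬝ᵥ ((Nᴴ * N) *ᵥ v) = ((∑ r, ‖(N *ᵥ v) r‖ ^ 2 : ℝ) : ℂ) := by
  rw [← Matrix.mulVec_mulVec, Matrix.dotProduct_mulVec, ← Matrix.star_mulVec]
  rw [dotProduct, Complex.ofReal_sum]
  refine Finset.sum_congr rfl fun r _ => ?_
  simp only [Pi.star_apply, Complex.star_def]
  rw [mul_comm, Complex.mul_conj']
  push_cast
  rfl

/-- Frobenius Cauchy-Schwarz. -/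
lemma frob_cs {m n : Type*} [Fintype m] [Fintype n] (X Y : Matrix m n ℂ) :
    ‖(Xᴴ * Y).trace‖ ^ 2 ≤ (Xᴴ * X).trace.re * (Yᴴ * Y).trace.re := by
  classical
  let f : Matrix m n ℂ → EuclideanSpace ℂ (m × n) := fun M => WithLp.toLp 2 (fun p : m × n => M p.1 p.2)
  have hin : ∀ M N : Matrix m n ℂ, (Mᴴ * N).trace = inner ℂ (f M) (f N) := by
    intro M N
    simp only [Matrix.trace, Matrix.diag, Matrix.mul_apply, Matrix.conjTranspose_apply]
    rw [PiLp.inner_apply]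
    rw [Fintype.sum_prod_type]
    rw [Finset.sum_comm]
    simp [f, RCLike.inner_apply, mul_comm]
  have h1 := norm_inner_le_norm (𝕜 := ℂ) (f X) (f Y)
  have h2 : ‖(Xᴴ * Y).trace‖ ^ 2 ≤ (‖f X‖ * ‖f Y‖)^2 := by
    rw [hin]
    exact pow_le_pow_left₀ (norm_nonneg _) h1 2
  calc ‖(Xᴴ * Y).trace‖ ^ 2 ≤ (‖f X‖ * ‖f Y‖)^2 := h2
    _ = (Xᴴ * X).trace.re * (Yᴴ * Y).trace.re := by
        rw [mul_pow, ← inner_self_eq_norm_sq (𝕜 := ℂ), ← inner_self_eq_norm_sq (𝕜 := ℂ),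
          ← hin, ← hin]
        rfl

lemma trace_self_nonneg {m n : Type*} [Fintype m] [Fintype n] (Y : Matrix m n ℂ) :
    0 ≤ (Yᴴ * Y).trace.re := by
  classical
  have : (Yᴴ * Y).trace = ∑ j, ∑ i, (starRingEnd ℂ) (Y i j) * Y i j := by
    simp [Matrix.trace, Matrix.diag, Matrix.mul_apply, Matrix.conjTranspose_apply]
  rw [this]
  simp only [Complex.re_sum]
  apply Finset.sum_nonneg; intro j _
  apply Finset.sum_nonneg; intro i _
  rw [mul_comm, Complex.mul_conj']
  rw [← Complex.ofReal_pow, Complex.ofReal_re]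
  positivity

/-- rank-restricted trace bound -/
lemma trace_rank_bound {d d' : ℕ} (C : Matrix (Fin d') (Fin d) ℂ)
    (Z : Matrix (Fin d) (Fin d') ℂ) :
    ‖(C * Z).trace‖ ^ 2 ≤ d * ((C * Z)ᴴ * (C * Z)).trace.re := by
  classical
  set G : Matrix (Fin d) (Fin d) ℂ := Cᴴ * C with hGdef
  have hG : G.IsHermitian := isHermitian_conjTranspose_mul_self C
  set U : Matrix (Fin d) (Fin d) ℂ := ↑(hG.eigenvectorUnitary) with hU
  have hUU : star U * U = 1 := Matrix.mem_unitaryGroup_iff'.mp hG.eigenvectorUnitary.2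
  have hUU' : U * star U = 1 := Matrix.mem_unitaryGroup_iff.mp hG.eigenvectorUnitary.2
  set lam := hG.eigenvalues with hlam
  set Dg : Matrix (Fin d) (Fin d) ℂ := diagonal (fun i => (lam i : ℂ)) with hDg
  set Dp : Matrix (Fin d) (Fin d) ℂ :=
    diagonal (fun i => if lam i = 0 then 0 else ((lam i : ℂ))⁻¹) with hDp
  set Dq : Matrix (Fin d) (Fin d) ℂ :=
    diagonal (fun i => if lam i = 0 then 0 else 1) with hDq
  have hspec : G = U * Dg * star U := hG.spectral_theorem
  set Gp : Matrix (Fin d) (Fin d) ℂ := U * Dp * star U with hGp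
  have sandwich : ∀ D₁ D₂ : Matrix (Fin d) (Fin d) ℂ,
      (U * D₁ * star U) * (U * D₂ * star U) = U * (D₁ * D₂) * star U := by
    intro D₁ D₂
    simp only [Matrix.mul_assoc]
    rw [← Matrix.mul_assoc (star U) U, hUU, Matrix.one_mul]
  have hDpDg : Dp * Dg = Dq := by
    rw [hDp, hDg, hDq, diagonal_mul_diagonal]
    refine congrArg Matrix.diagonal (funext fun i => ?_)
    by_cases h : lam i = 0
    · simp [h]
    · simp only [h, if_false]
      exact inv_mul_cancel₀ (Complex.ofReal_ne_zero.mpr h)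
  have hDqDp : Dq * Dp = Dp := by
    rw [hDp, hDq, diagonal_mul_diagonal]
    refine congrArg Matrix.diagonal (funext fun i => ?_)
    by_cases h : lam i = 0 <;> simp [h]
  have hDqDg : Dq * Dg = Dg := by
    rw [hDg, hDq, diagonal_mul_diagonal]
    refine congrArg Matrix.diagonal (funext fun i => ?_)
    by_cases h : lam i = 0 <;> simp [h]
  have hGpG : Gp * G = U * Dq * star U := by
    rw [hGp, hspec, sandwich, hDpDg]
  -- C * (Gp * G) = C
  have hDqH : Dqᴴ = Dq := by
    rw [hDq, diagonal_conjTranspose]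
    refine congrArg Matrix.diagonal (funext fun i => ?_)
    simp only [Pi.star_apply]
    by_cases h : lam i = 0 <;> simp [h]
  have hCQ : C * (Gp * G) = C := by
    have h0 : (1 - Dq) * Dg = 0 := by
      rw [Matrix.sub_mul, Matrix.one_mul, hDqDg, sub_self]
    have e1 : 1 - U * Dq * star U = U * (1 - Dq) * star U := by
      rw [Matrix.mul_sub, Matrix.sub_mul, Matrix.mul_one, hUU']
    have key : (1 - U * Dq * star U) * G * (1 - U * Dq * star U) = 0 := by
      rw [hspec, e1, sandwich, h0]
      simp
    have h1' : (U * Dq * star U)ᴴ = U * Dq * star U := by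
      simp only [conjTranspose_mul]
      simp only [hDqH]
      simp only [← Matrix.star_eq_conjTranspose, star_star, Matrix.mul_assoc]
    have h1 : (1 - U * Dq * star U)ᴴ = 1 - U * Dq * star U := by
      rw [conjTranspose_sub, conjTranspose_one, h1']
    have hker : C * (1 - U * Dq * star U) = 0 := by
      rw [← conjTranspose_mul_self_eq_zero]
      calc (C * (1 - U * Dq * star U))ᴴ * (C * (1 - U * Dq * star U))
          = (1 - U * Dq * star U)ᴴ * (Cᴴ * C) * (1 - U * Dq * star U) := by
            simp only [conjTranspose_mul, Matrix.mul_assoc]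
        _ = (1 - U * Dq * star U) * G * (1 - U * Dq * star U) := by
            rw [h1, hGdef]
        _ = 0 := key
    rw [hGpG]
    rw [Matrix.mul_sub, Matrix.mul_one] at hker
    exact (sub_eq_zero.mp hker).symm
  -- the projector Q
  set Q : Matrix (Fin d') (Fin d') ℂ := C * Gp * Cᴴ with hQ
  have hDpH : Dpᴴ = Dp := by
    rw [hDp, diagonal_conjTranspose]
    refine congrArg Matrix.diagonal (funext fun i => ?_)
    simp only [Pi.star_apply]
    by_cases h : lam i = 0 <;> simp [h, ← Complex.ofReal_inv]
  have hGpH : Gpᴴ = Gp := by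
    rw [hGp]
    simp only [conjTranspose_mul]
    simp only [hDpH]
    simp only [← Matrix.star_eq_conjTranspose, star_star, Matrix.mul_assoc]
  have hQH : Qᴴ = Q := by
    rw [hQ]
    simp only [conjTranspose_mul, conjTranspose_conjTranspose, hGpH]
    simp only [Matrix.mul_assoc]
  have hQCZ : Q * (C * Z) = C * Z := by
    calc Q * (C * Z) = (C * (Gp * G)) * Z := by
          rw [hQ, hGdef]; simp only [Matrix.mul_assoc]
      _ = C * Z := by rw [hCQ]
  have hGpGGp : Gp * G * Gp = Gp := by
    rw [hGpG, hGp, sandwich, hDqDp]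
  have hQQ : Q * Q = Q := by
    calc Q * Q = C * (Gp * G * Gp) * Cᴴ := by
          rw [hQ, hGdef]; simp only [Matrix.mul_assoc]
      _ = Q := by rw [hGpGGp, hQ]
  have hDgDp : Dg * Dp = Dq := by
    rw [hDp, hDg, hDq, diagonal_mul_diagonal]
    refine congrArg Matrix.diagonal (funext fun i => ?_)
    by_cases h : lam i = 0
    · simp [h]
    · simp only [h, if_false]
      exact mul_inv_cancel₀ (Complex.ofReal_ne_zero.mpr h)
  have htrQ : Q.trace.re ≤ (d : ℝ) := by
    have e1 : Q.trace = (U * Dq * star U).trace := by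
      rw [hQ, Matrix.trace_mul_comm (C * Gp) Cᴴ, ← Matrix.mul_assoc, ← hGdef,
        hspec, hGp, sandwich, hDgDp]
    have e2 : Q.trace = Dq.trace := by
      rw [e1, Matrix.trace_mul_comm, ← Matrix.mul_assoc, hUU, Matrix.one_mul]
    rw [e2, hDq, Matrix.trace_diagonal]
    rw [Complex.re_sum]
    calc ∑ i, (if lam i = 0 then (0:ℂ) else 1).re ≤ ∑ _i : Fin d, (1:ℝ) := by
          apply Finset.sum_le_sum
          intro i _
          by_cases h : lam i = 0 <;> simp [h]
      _ = d := by simp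
  -- put it together via Cauchy-Schwarz
  have cs := frob_cs Q (C * Z)
  rw [hQH] at cs
  rw [hQCZ, hQQ] at cs
  have h2 : (C * Z).trace = (Q * (C * Z)).trace := by rw [hQCZ]
  calc ‖(C * Z).trace‖ ^ 2 ≤ Q.trace.re * ((C * Z)ᴴ * (C * Z)).trace.re := cs
    _ ≤ (d : ℝ) * ((C * Z)ᴴ * (C * Z)).trace.re := by
        exact mul_le_mul_of_nonneg_right htrQ (trace_self_nonneg _)

lemma vec_bound {d d' : ℕ} (hd' : 0 < d') (C D : Matrix (Fin d') (Fin d) ℂ)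
    (x : Fin d × Fin d → ℂ) :
    ‖star (psiPlus d') ⬝ᵥ ((C ⊗ₖ D) *ᵥ x)‖ ^ 2
      ≤ ((d : ℝ) / d') * ∑ p, ‖((C ⊗ₖ D) *ᵥ x) p‖ ^ 2 := by
  classical
  set X : Matrix (Fin d) (Fin d) ℂ := Matrix.of (fun j k => x (j, k)) with hX
  set Y : Matrix (Fin d') (Fin d') ℂ := C * (X * Dᵀ) with hY
  have hentry : ∀ p : Fin d' × Fin d', ((C ⊗ₖ D) *ᵥ x) p = Y p.1 p.2 := by
    rintro ⟨i, i'⟩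
    simp only [Matrix.mulVec, dotProduct, kroneckerMap_apply, hY, hX,
      Matrix.mul_apply, Matrix.transpose_apply, Matrix.of_apply, Finset.mul_sum,
      Finset.sum_mul]
    rw [Fintype.sum_prod_type]
    refine Finset.sum_congr rfl fun j _ => Finset.sum_congr rfl fun k _ => by ring
  -- the dot product with psiPlus is the trace of Y
  have hdot : star (psiPlus d') ⬝ᵥ ((C ⊗ₖ D) *ᵥ x)
      = ((1 / Real.sqrt d' : ℝ) : ℂ) * Y.trace := by
    rw [star_psiPlus]
    rw [dotProduct]
    rw [Matrix.trace]
    unfold Matrix.diag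
    rw [Finset.mul_sum, Fintype.sum_prod_type]
    rw [Finset.sum_congr rfl (fun i (_ : i ∈ Finset.univ) => Finset.sum_congr rfl
      (fun i' (_ : i' ∈ Finset.univ) => by
        rw [hentry ⟨i, i'⟩]))]
    simp only [psiPlus]
    refine Finset.sum_congr rfl fun i _ => ?_
    rw [Finset.sum_eq_single i]
    · simp
    · intro b _ hb
      simp [Ne.symm hb]
    · simp
  have hsum : ∑ p, ‖((C ⊗ₖ D) *ᵥ x) p‖ ^ 2 = (Yᴴ * Y).trace.re := by
    rw [trace_conj_mul_self, Complex.ofReal_re]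
    exact Finset.sum_congr rfl fun p _ => by rw [hentry p]
  rw [hdot, hsum]
  rw [norm_mul, mul_pow]
  have hc : ‖((1 / Real.sqrt d' : ℝ) : ℂ)‖ ^ 2 = 1 / d' := by
    rw [Complex.norm_real, Real.norm_eq_abs]
    rw [abs_of_nonneg (by positivity)]
    rw [div_pow, one_pow, Real.sq_sqrt (Nat.cast_nonneg d')]
  rw [hc]
  have := trace_rank_bound C (X * Dᵀ)
  rw [← hY] at this
  calc 1 / (d' : ℝ) * ‖Y.trace‖ ^ 2 ≤ 1 / d' * (d * (Yᴴ * Y).trace.re) := by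
        apply mul_le_mul_of_nonneg_left this (by positivity)
    _ = (d : ℝ) / d' * (Yᴴ * Y).trace.re := by ring

/-- a `d⊗d` state embedded isometrically in a `d'⊗d'` system has
`d'⊗d'` singlet fraction at most `d/d'` after any local filtering. -/
theorem embedded_state_singlet_fraction_le
    (d d' : ℕ) (hdd' : d < d')
    (σ : Matrix (Fin d × Fin d) (Fin d × Fin d) ℂ)
    (hσ : σ.PosSemidef) (htrσ : σ.trace = 1)
    (V₁ V₂ : Matrix (Fin d') (Fin d) ℂ)
    (hV₁ : V₁ᴴ * V₁ = 1) (hV₂ : V₂ᴴ * V₂ = 1)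
    (ρ : Matrix (Fin d' × Fin d') (Fin d' × Fin d') ℂ)
    (hρ : ρ = (V₁ ⊗ₖ V₂) * σ * (V₁ ⊗ₖ V₂)ᴴ)
    (A B : Matrix (Fin d') (Fin d') ℂ)
    (hpos : 0 < ((A ⊗ₖ B) * ρ * (A ⊗ₖ B)ᴴ).trace.re) :
    singletFraction
      ((((A ⊗ₖ B) * ρ * (A ⊗ₖ B)ᴴ).trace)⁻¹ • ((A ⊗ₖ B) * ρ * (A ⊗ₖ B)ᴴ))
      ≤ (d : ℝ) / d' := by
  classical
  have hd' : 0 < d' := lt_of_le_of_lt (Nat.zero_le d) hdd'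
  obtain ⟨L, hL⟩ := (by open scoped MatrixOrder in exact CStarAlgebra.nonneg_iff_eq_star_mul_self.mp hσ.nonneg : ∃ L, σ = star L * L)
  rw [star_eq_conjTranspose] at hL
  set W : Matrix (Fin d' × Fin d') (Fin d × Fin d) ℂ := (A * V₁) ⊗ₖ (B * V₂) with hW
  set N : Matrix (Fin d × Fin d) (Fin d' × Fin d') ℂ := L * Wᴴ with hN
  have h1 : (A ⊗ₖ B) * (V₁ ⊗ₖ V₂) = W := by rw [hW, mul_kronecker_mul]
  have h2 : (V₁ ⊗ₖ V₂)ᴴ * (A ⊗ₖ B)ᴴ = Wᴴ := by rw [← conjTranspose_mul, h1]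
  have hM : (A ⊗ₖ B) * ρ * (A ⊗ₖ B)ᴴ = Nᴴ * N := by
    rw [hρ, hL, hN, conjTranspose_mul, conjTranspose_conjTranspose]
    calc (A ⊗ₖ B) * ((V₁ ⊗ₖ V₂) * (Lᴴ * L) * (V₁ ⊗ₖ V₂)ᴴ) * (A ⊗ₖ B)ᴴ
        = ((A ⊗ₖ B) * (V₁ ⊗ₖ V₂)) * Lᴴ * (L * ((V₁ ⊗ₖ V₂)ᴴ * (A ⊗ₖ B)ᴴ)) := by
          simp only [Matrix.mul_assoc]
      _ = W * Lᴴ * (L * Wᴴ) := by rw [h1, h2]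
  rw [hM] at hpos ⊢
  set T : ℝ := ∑ p : (Fin d × Fin d) × (Fin d' × Fin d'), ‖N p.1 p.2‖ ^ 2 with hT
  have htr : (Nᴴ * N).trace = (T : ℂ) := trace_conj_mul_self N
  rw [htr, Complex.ofReal_re] at hpos
  set S : ℝ := ∑ r, ‖(N *ᵥ psiPlus d') r‖ ^ 2 with hS
  have hnum : star (psiPlus d') ⬝ᵥ ((Nᴴ * N) *ᵥ psiPlus d') = (S : ℂ) :=
    dot_conj_self N (psiPlus d')
  -- key bound
  have claim1 : ∀ r p', N r p' = star ((W *ᵥ (fun q => star (L r q))) p') := by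
    intro r p'
    simp only [hN, Matrix.mul_apply, Matrix.mulVec, dotProduct,
      Matrix.conjTranspose_apply]
    rw [← star_star (∑ q, L r q * star (W p' q))]
    congr 1
    rw [star_sum]
    refine Finset.sum_congr rfl fun q _ => ?_
    rw [StarMul.star_mul, star_star]
  have claim2 : ∀ r, (N *ᵥ psiPlus d') r
      = star (star (psiPlus d') ⬝ᵥ (W *ᵥ (fun q => star (L r q)))) := by
    intro r
    rw [dotProduct, star_sum]
    rw [Matrix.mulVec, dotProduct]
    refine Finset.sum_congr rfl fun p' _ => ?_
    rw [Pi.star_apply, StarMul.star_mul, star_star, claim1 r p']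
  have hkey : S ≤ ((d : ℝ) / d') * T := by
    have hb : ∀ r, ‖(N *ᵥ psiPlus d') r‖ ^ 2
        ≤ ((d : ℝ) / d') * ∑ p', ‖((W *ᵥ (fun q => star (L r q)))) p'‖ ^ 2 := by
      intro r
      rw [claim2 r, norm_star]
      exact vec_bound hd' (A * V₁) (B * V₂) _
    calc S ≤ ∑ r, ((d : ℝ) / d') * ∑ p', ‖((W *ᵥ (fun q => star (L r q)))) p'‖ ^ 2 := by
          exact Finset.sum_le_sum fun r _ => hb r
      _ = ((d : ℝ) / d') * ∑ r, ∑ p', ‖((W *ᵥ (fun q => star (L r q)))) p'‖ ^ 2 := by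
          rw [Finset.mul_sum]
      _ = ((d : ℝ) / d') * T := by
          have he : ∀ r : Fin d × Fin d,
              (∑ p', ‖((W *ᵥ (fun q => star (L r q)))) p'‖ ^ 2)
                = ∑ p', ‖N r p'‖ ^ 2 := fun r =>
            Finset.sum_congr rfl fun p' _ => by rw [claim1 r p', norm_star]
          have ht : (∑ r, ∑ p', ‖((W *ᵥ (fun q => star (L r q)))) p'‖ ^ 2) = T := by
            rw [Finset.sum_congr rfl fun r (_ : r ∈ Finset.univ) => he r, hT]
            exact (Fintype.sum_prod_type (f := fun p : (Fin d × Fin d) × (Fin d' × Fin d') => ‖N p.1 p.2‖ ^ 2)).symm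
          rw [ht]
  -- assemble
  unfold singletFraction
  rw [Matrix.smul_mulVec, dotProduct_smul, htr, hnum]
  rw [smul_eq_mul, ← Complex.ofReal_inv, ← Complex.ofReal_mul, Complex.ofReal_re]
  rw [inv_mul_eq_div, div_le_iff₀ hpos]
  linarith [hkey]
end

section
/- The state ρ_AB = (b/(a+b))|Ψ⟩⟨Ψ| + (a/(a+b))|01⟩⟨01| with |Ψ⟩ = a|00⟩ + b|11⟩, a,b > 0, a²+b² = 1, is quasidistillable by one-way local filtering: there exist sequences of local matrices Aₙ (on Alice's qubit) and Bₙ (on Bob's qubit) such that the normalized filtered states have singlet fraction tending to 1 while the success probabilities tend to 0. -/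
open Matrix Kronecker

/-- The vector `|0⟩⊗|1⟩` in `ℂ²⊗ℂ²`. -/
def e01 : Fin 2 × Fin 2 → ℂ := fun q => if q.1 = 0 ∧ q.2 = 1 then 1 else 0

/-- The vector `|Ψ⟩ = a|00⟩ + b|11⟩` in `ℂ²⊗ℂ²`. -/
noncomputable def psiAB (a b : ℝ) : Fin 2 × Fin 2 → ℂ :=
  fun q => if q.1 = 0 ∧ q.2 = 0 then (a : ℂ)
    else if q.1 = 1 ∧ q.2 = 1 then (b : ℂ) else 0

/-- The state `ρ_AB = (b/(a+b))|Ψ⟩⟨Ψ| + (a/(a+b))|01⟩⟨01|`. -/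
noncomputable def rhoQuasi (a b : ℝ) : Matrix (Fin 2 × Fin 2) (Fin 2 × Fin 2) ℂ :=
  ((b / (a + b) : ℝ) : ℂ) • vecMulVec (psiAB a b) (star (psiAB a b)) +
    ((a / (a + b) : ℝ) : ℂ) • vecMulVec e01 (star e01)

/-- Alice's filter. -/
noncomputable def Afil (a b : ℝ) (n : ℕ) : Matrix (Fin 2) (Fin 2) ℂ :=
  diagonal ![((b / ((n:ℝ)+1) : ℝ) : ℂ), (a : ℂ)]

/-- Bob's filter. -/
noncomputable def Bfil (n : ℕ) : Matrix (Fin 2) (Fin 2) ℂ :=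
  diagonal ![1, ((((n:ℝ)+1)⁻¹ : ℝ) : ℂ)]

set_option maxHeartbeats 1000000 in
theorem trace_eq_aux (a b : ℝ) (hab : a + b ≠ 0) (n : ℕ) :
    ((Afil a b n ⊗ₖ Bfil n) * rhoQuasi a b * (Afil a b n ⊗ₖ Bfil n)ᴴ).trace
    = (((b/(a+b)) * (2*(a*b/((n:ℝ)+1))^2) + (a/(a+b))*(b/((n:ℝ)+1)^2)^2 : ℝ) : ℂ) := by
  have hn : ((n:ℝ)+1) ≠ 0 := by positivity
  simp [Matrix.trace, Matrix.diag, Matrix.mul_apply, Fintype.sum_prod_type,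
    Fin.sum_univ_two, rhoQuasi, psiAB, e01, Afil, Bfil, Matrix.kroneckerMap_apply,
    Matrix.vecMulVec_apply, Matrix.conjTranspose_apply, Matrix.diagonal_apply]
  have hn' : ((n:ℝ)+1 : ℂ) ≠ 0 := by exact_mod_cast hn
  have hab' : ((a:ℂ)+b) ≠ 0 := by exact_mod_cast (Complex.ofReal_ne_zero.mpr hab)
  field_simp
  ring

set_option maxHeartbeats 1000000 in
theorem num_eq_aux (a b : ℝ) (hab : a + b ≠ 0) (n : ℕ) :
    star (psiPlus 2) ⬝ᵥ ((Afil a b n ⊗ₖ Bfil n) * rhoQuasi a b * (Afil a b n ⊗ₖ Bfil n)ᴴ) *ᵥ psiPlus 2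
    = (((b/(a+b)) * (2*(a*b/((n:ℝ)+1))^2) : ℝ) : ℂ) := by
  have hn' : ((n:ℝ)+1 : ℂ) ≠ 0 := by
    exact_mod_cast (by positivity : ((n:ℝ)+1) ≠ 0)
  have hab' : ((a:ℂ)+(b:ℂ)) ≠ 0 := by exact_mod_cast (Complex.ofReal_ne_zero.mpr hab)
  have h2 : ((Real.sqrt 2 : ℝ) : ℂ)^2 = 2 := by
    norm_cast
    exact_mod_cast Real.sq_sqrt (by norm_num)
  have hsq : ((Real.sqrt 2 : ℝ) : ℂ)⁻¹^2 = (2:ℂ)⁻¹ := by rw [inv_pow, h2]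
  simp [dotProduct, Matrix.mulVec, Matrix.mul_apply, Fintype.sum_prod_type,
    Fin.sum_univ_two, rhoQuasi, psiAB, e01, psiPlus, Afil, Bfil, Matrix.kroneckerMap_apply,
    Matrix.vecMulVec_apply, Matrix.conjTranspose_apply, Matrix.diagonal_apply]
  ring_nf
  rw [hsq]
  ring

/-- the state `ρ_AB = (b/(a+b))|Ψ⟩⟨Ψ| + (a/(a+b))|01⟩⟨01|`,
`|Ψ⟩ = a|00⟩ + b|11⟩`, is quasidistillable by one-way local filtering: there
are local filter sequences whose normalized outputs have singlet fraction
tending to `1` while the success probabilities tend to `0`. -/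
theorem rhoQuasi_quasidistillable
    (a b : ℝ) (ha : 0 < a) (hb : 0 < b) (hab : a ^ 2 + b ^ 2 = 1) :
    ∃ (A B : ℕ → Matrix (Fin 2) (Fin 2) ℂ),
      Filter.Tendsto
        (fun n => singletFraction
          ((((A n ⊗ₖ B n) * rhoQuasi a b * (A n ⊗ₖ B n)ᴴ).trace)⁻¹ •
            ((A n ⊗ₖ B n) * rhoQuasi a b * (A n ⊗ₖ B n)ᴴ)))
        Filter.atTop (nhds 1) ∧
      Filter.Tendsto
        (fun n => ((A n ⊗ₖ B n) * rhoQuasi a b * (A n ⊗ₖ B n)ᴴ).trace.re)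
        Filter.atTop (nhds 0) := by
  have habne : a + b ≠ 0 := by positivity
  refine ⟨Afil a b, Bfil, ?_, ?_⟩
  · -- singlet fraction → 1
    set T1 : ℕ → ℝ := fun n => (b/(a+b)) * (2*(a*b/((n:ℝ)+1))^2) with hT1
    set T2 : ℕ → ℝ := fun n => (a/(a+b))*(b/((n:ℝ)+1)^2)^2 with hT2
    have hval : ∀ n, singletFraction
        ((((Afil a b n ⊗ₖ Bfil n) * rhoQuasi a b * (Afil a b n ⊗ₖ Bfil n)ᴴ).trace)⁻¹ •
          ((Afil a b n ⊗ₖ Bfil n) * rhoQuasi a b * (Afil a b n ⊗ₖ Bfil n)ᴴ))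
        = (T1 n + T2 n)⁻¹ * T1 n := by
      intro n
      unfold singletFraction
      rw [Matrix.smul_mulVec, dotProduct_smul, trace_eq_aux a b habne n]
      rw [smul_eq_mul, num_eq_aux a b habne n]
      rw [← Complex.ofReal_inv, ← Complex.ofReal_mul, Complex.ofReal_re]
    have hform : ∀ n, (T1 n + T2 n)⁻¹ * T1 n
        = 1 - (2*a*b*((n:ℝ)+1)^2 + 1)⁻¹ := by
      intro n
      have hn : (0:ℝ) < (n:ℝ)+1 := by positivity
      have hT1pos : 0 < T1 n := by
        simp only [hT1]; positivity
      have hT2pos : 0 < T2 n := by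
        simp only [hT2]; positivity
      have hden : (0:ℝ) < 2*a*b*((n:ℝ)+1)^2 + 1 := by positivity
      rw [eq_sub_iff_add_eq]
      simp only [hT1, hT2]
      field_simp [hT1, hT2]
    simp only [hval, hform]
    have hd : Filter.Tendsto (fun n : ℕ => 2*a*b*((n:ℝ)+1)^2 + 1)
        Filter.atTop Filter.atTop := by
      apply Filter.tendsto_atTop_add_const_right
      apply Filter.Tendsto.const_mul_atTop (by positivity : (0:ℝ) < 2*a*b)
      have h1 : Filter.Tendsto (fun n : ℕ => ((n:ℝ)+1)) Filter.atTop Filter.atTop :=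
        Filter.tendsto_atTop_add_const_right _ 1 tendsto_natCast_atTop_atTop
      have := h1.atTop_mul_atTop₀ h1
      simpa [sq] using this
    have := (tendsto_const_nhds (x := (1:ℝ)) (f := Filter.atTop (α := ℕ))).sub
      hd.inv_tendsto_atTop
    simpa using this
  · -- trace → 0
    have hval : ∀ n, (((Afil a b n ⊗ₖ Bfil n) * rhoQuasi a b * (Afil a b n ⊗ₖ Bfil n)ᴴ).trace).re
        = (b/(a+b)) * (2*(a*b)^2) * (((n:ℝ)+1)⁻¹)^2 + (a/(a+b))*b^2 * (((n:ℝ)+1)⁻¹)^4 := by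
      intro n
      rw [trace_eq_aux a b habne n, Complex.ofReal_re]
      have hn : ((n:ℝ)+1) ≠ 0 := by positivity
      field_simp
    simp only [hval]
    have hinv : Filter.Tendsto (fun n : ℕ => (((n:ℝ)+1)⁻¹)) Filter.atTop (nhds 0) := by
      apply Filter.Tendsto.inv_tendsto_atTop
      exact Filter.tendsto_atTop_add_const_right _ 1 tendsto_natCast_atTop_atTop
    have := ((hinv.pow 2).const_mul ((b/(a+b)) * (2*(a*b)^2))).add
      ((hinv.pow 4).const_mul ((a/(a+b))*b^2))
    simpa using this
end
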